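/- arXiv:1312.1422 — 9 statements merged into one kernel-verified Lean document; each statement's English description precedes it below -/
import Mathlib

section
/- Let A be a finite group acting transitively on a finite set Ω, let G be a normal subgroup of A with A/G cyclic generated by the coset xG. Then G acts transitively on Ω if and only if some element of the coset xG has a fixed point in Ω. -/
open MulAction

/-- If `A` acts transitively on `Ω`, `G ⊴ A` and `A/G` is cyclic generated
by the coset `xG`, then `G` is transitive on `Ω` iff some element of the coset `xG` has
a fixed point. -/
theorem subgroup_transitive_iff_coset_element_has_fixed_point
    (A Ω : Type*) [Group A] [Finite A] [Finite Ω] [Nonempty Ω] [MulAction A Ω]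
    [MulAction.IsPretransitive A Ω]
    (G : Subgroup A) [G.Normal] (x : A)
    (hgen : ∀ a : A, ∃ k : ℤ,
      (QuotientGroup.mk a : A ⧸ G) = (QuotientGroup.mk x : A ⧸ G) ^ k) :
    (∀ ω ω' : Ω, ∃ g ∈ G, g • ω = ω') ↔ ∃ g ∈ G, ∃ ω : Ω, (x * g) • ω = ω := by
  constructor
  · intro htrans
    obtain ⟨ω₀⟩ := ‹Nonempty Ω›
    obtain ⟨g, hg, hgω⟩ := htrans (x • ω₀) ω₀
    refine ⟨x⁻¹ * g * x, Subgroup.Normal.conj_mem' ‹G.Normal› g hg x, ω₀, ?_⟩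
    have : x * (x⁻¹ * g * x) = g * x := by group
    rw [this, mul_smul]
    exact hgω
  · rintro ⟨g, hg, ω, hfix⟩
    set y := x * g with hy
    -- y^k fixes ω for all k : ℤ
    have hystab : y ∈ stabilizer A ω := hfix
    have hpow : ∀ k : ℤ, (y ^ k) • ω = ω := fun k =>
      (zpow_mem hystab k : y ^ k ∈ stabilizer A ω)
    -- every point is in the G-orbit of ω
    have horbit : ∀ ω' : Ω, ∃ h ∈ G, h • ω = ω' := by
      intro ω'
      obtain ⟨a, ha⟩ := exists_smul_eq A ω ω'
      obtain ⟨k, hk⟩ := hgen a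
      have hmkyx : (QuotientGroup.mk y : A ⧸ G) = QuotientGroup.mk x := by
        rw [hy]
        refine (QuotientGroup.eq).mpr ?_
        simpa [mul_assoc] using hg
      have hk' : (QuotientGroup.mk (y ^ k) : A ⧸ G) = QuotientGroup.mk a := by
        rw [QuotientGroup.mk_zpow, hmkyx, hk]
      have hmem : (y ^ k)⁻¹ * a ∈ G := (QuotientGroup.eq).mp hk'
      refine ⟨y ^ k * ((y ^ k)⁻¹ * a) * (y ^ k)⁻¹,
        Subgroup.Normal.conj_mem ‹G.Normal› _ hmem _, ?_⟩
      have hinv : (y ^ k)⁻¹ • ω = ω := by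
        rw [← zpow_neg]
        exact hpow (-k)
      calc (y ^ k * ((y ^ k)⁻¹ * a) * (y ^ k)⁻¹) • ω
          = a • ((y ^ k)⁻¹ • ω) := by
            rw [← mul_smul]; congr 1; group
        _ = ω' := by rw [hinv, ha]
    intro ω₁ ω₂
    obtain ⟨h₁, hh₁, hω₁⟩ := horbit ω₁
    obtain ⟨h₂, hh₂, hω₂⟩ := horbit ω₂
    refine ⟨h₂ * h₁⁻¹, G.mul_mem hh₂ (G.inv_mem hh₁), ?_⟩
    rw [mul_smul, ← hω₁, inv_smul_smul, hω₂]
end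

section
/- Let A be a finite group acting on a finite set Ω, G a normal subgroup of A with A/G cyclic generated by xG. Then (1/|G|) · Σ_{g ∈ xG} |Fix(g)| equals the number of orbits of A on Ω that are also orbits of G on Ω (the common (A,G)-orbits). -/
/-!
Count the pairs `(a, ω)` with `a ∈ xG` and `a • ω = ω` point by point. If some `a ∈ xG` fixes `ω`,
then `A/G` is generated by `aG`, so every `b ∈ A` lies in `G aᵏ` and moves `ω` like an element of
`G`: the `A`-orbit of `ω` is its `G`-orbit. Conversely, if the orbits agree then `x⁻¹ • ω = g • ω`
with `g ∈ G`, and `xg ∈ xG` fixes `ω`. In that case the elements of `xG` fixing `ω` form a coset of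
`Stab_G(ω)`, and by orbit-stabilizer `|Stab_G(ω)|` summed over a `G`-orbit is `|G|`.
-/

open MulAction
open scoped Classical

open Finset

theorem sum_card_stabilizer_orbit {H Ω : Type*} [Group H] [MulAction H Ω] [Finite H] [Fintype Ω]
    (ω₀ : Ω) : ∑ ω ∈ (orbit H ω₀).toFinset, Nat.card (stabilizer H ω) = Nat.card H := by
  have hconst : ∀ ω ∈ (orbit H ω₀).toFinset,
      Nat.card (stabilizer H ω) = Nat.card (stabilizer H ω₀) := by
    intro ω hω
    obtain ⟨h, rfl⟩ := Set.mem_toFinset.mp hω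
    exact Nat.card_congr (stabilizerEquivStabilizer rfl).toEquiv.symm
  rw [sum_congr rfl hconst, sum_const, smul_eq_mul, ← Set.ncard_eq_toFinset_card',
    ← index_stabilizer, mul_comm, Subgroup.card_mul_index]

theorem sum_card_stabilizer_filter_eq_card_mul_ncard_orbits {H Ω : Type*} [Group H]
    [MulAction H Ω] [Finite H] [Fintype Ω] (p : Ω → Prop)
    (hp : ∀ ω, p ω → ∀ ω' ∈ orbit H ω, p ω') :
    ∑ ω with p ω, Nat.card (stabilizer H ω) =
      Nat.card H * {O : Set Ω | ∃ ω, p ω ∧ O = orbit H ω}.ncard := by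
  set t := {O : Set Ω | ∃ ω, p ω ∧ O = orbit H ω}.toFinset
  have hmaps : ∀ ω ∈ univ.filter p, orbit H ω ∈ t := fun ω hω =>
    Set.mem_toFinset.mpr ⟨ω, (mem_filter.mp hω).2, rfl⟩
  have hfiber : ∀ ω₀, p ω₀ →
      ({ω | p ω ∧ orbit H ω = orbit H ω₀} : Finset Ω) = (orbit H ω₀).toFinset := by
    intro ω₀ hω₀
    ext ω
    simp only [mem_filter, mem_univ, true_and, Set.mem_toFinset, orbit_eq_iff]
    exact ⟨And.right, fun hω => ⟨hp ω₀ hω₀ ω hω, hω⟩⟩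
  calc ∑ ω with p ω, Nat.card (stabilizer H ω)
      = ∑ O ∈ t, ∑ ω ∈ univ.filter p with orbit H ω = O, Nat.card (stabilizer H ω) :=
        (sum_fiberwise_of_maps_to hmaps _).symm
    _ = ∑ O ∈ t, Nat.card H := sum_congr rfl fun O hO => by
        obtain ⟨ω₀, hω₀, rfl⟩ := Set.mem_toFinset.mp hO
        rw [filter_filter, hfiber ω₀ hω₀, sum_card_stabilizer_orbit]
    _ = _ := by rw [sum_const, smul_eq_mul, mul_comm, Set.ncard_eq_toFinset_card']

theorem sum_ncard_fixed_eq_sum_ncard_fixing {M Ω : Type*} [SMul M Ω] [Fintype M] [Fintype Ω]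
    (s : Finset M) :
    ∑ a ∈ s, {ω : Ω | a • ω = ω}.ncard = ∑ ω : Ω, {a | a ∈ s ∧ a • ω = ω}.ncard := by
  simp only [Set.ncard_eq_toFinset_card', Set.toFinset_ofPred, card_filter]
  rw [sum_comm]
  simp [ite_and]

section Coset

variable {A Ω : Type*} [Group A] [MulAction A Ω] {G : Subgroup A} {ω : Ω}

theorem ncard_coset_fixing_eq_card_stabilizer {x a₀ : A} (ha₀ : x⁻¹ * a₀ ∈ G)
    (hfix : a₀ • ω = ω) :
    {a : A | x⁻¹ * a ∈ G ∧ a • ω = ω}.ncard = Nat.card (stabilizer G ω) := by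
  rw [← Nat.card_coe_set_eq]
  refine Nat.card_congr
    { toFun := fun a => ⟨⟨a₀⁻¹ * a, ?_⟩, ?_⟩
      invFun := fun g => ⟨a₀ * g, ?_, ?_⟩
      left_inv := fun a => by ext; simp
      right_inv := fun g => by ext; simp }
  · simpa [mul_assoc] using mul_mem (inv_mem ha₀) a.2.1
  · simp [mem_stabilizer_iff, mul_smul, a.2.2, inv_smul_eq_iff, hfix]
  · simpa [mul_assoc] using mul_mem ha₀ g.1.2
  · have hg : ((g : G) : A) • ω = ω := g.2
    simp [mul_smul, hg, hfix]

theorem exists_coset_fixing_of_orbit_eq (x : A) (h : orbit A ω = orbit G ω) :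
    ∃ a, x⁻¹ * a ∈ G ∧ a • ω = ω := by
  obtain ⟨g, hg⟩ : x⁻¹ • ω ∈ orbit G ω := h ▸ mem_orbit ω x⁻¹
  refine ⟨x * g, by simp, ?_⟩
  have hg : (g : A) • ω = x⁻¹ • ω := hg
  rw [mul_smul, hg, smul_inv_smul]

theorem orbit_eq_of_coset_fixing [G.Normal] {x : A}
    (hgen : ∀ a : A, ∃ k : ℤ, (a : A ⧸ G) = (x : A ⧸ G) ^ k) {a : A} (ha : x⁻¹ * a ∈ G)
    (hfix : a • ω = ω) : orbit A ω = orbit G ω := by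
  refine (orbit_subgroup_subset G ω).antisymm' ?_
  rintro _ ⟨b, rfl⟩
  obtain ⟨k, hk⟩ := hgen b
  have hb : b * (a ^ k)⁻¹ ∈ G := by
    refine ‹G.Normal›.mem_comm ?_
    rw [← QuotientGroup.eq, hk, QuotientGroup.mk_zpow, QuotientGroup.eq.mpr ha]
  refine ⟨⟨_, hb⟩, ?_⟩
  have : (a ^ k) • ω = ω := (stabilizer A ω).zpow_mem hfix k
  show (b * (a ^ k)⁻¹) • ω = b • ω
  rw [mul_smul, inv_smul_eq_iff.mpr this.symm]

theorem ncard_coset_fixing_eq [G.Normal] {x : A}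
    (hgen : ∀ a : A, ∃ k : ℤ, (a : A ⧸ G) = (x : A ⧸ G) ^ k) :
    {a : A | x⁻¹ * a ∈ G ∧ a • ω = ω}.ncard =
      if orbit A ω = orbit G ω then Nat.card (stabilizer G ω) else 0 := by
  split_ifs with h
  · obtain ⟨a₀, ha₀, hfix⟩ := exists_coset_fixing_of_orbit_eq x h
    exact ncard_coset_fixing_eq_card_stabilizer ha₀ hfix
  · have hempty : {a : A | x⁻¹ * a ∈ G ∧ a • ω = ω} = ∅ :=
      Set.eq_empty_of_forall_notMem fun _ ha => h (orbit_eq_of_coset_fixing hgen ha.1 ha.2)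
    rw [hempty, Set.ncard_empty]

end Coset

theorem sum_fixed_points_coset_eq_card_common_orbits_general
    (A Ω : Type*) [Group A] [Fintype A] [Fintype Ω] [MulAction A Ω]
    (G : Subgroup A) [G.Normal] (x : A)
    (hgen : ∀ a : A, ∃ k : ℤ,
      (QuotientGroup.mk a : A ⧸ G) = (QuotientGroup.mk x : A ⧸ G) ^ k) :
    ∑ a : A, (if x⁻¹ * a ∈ G then Set.ncard {ω : Ω | a • ω = ω} else 0) =
      Nat.card G *
        Set.ncard {O : Set Ω | ∃ ω : Ω, O = MulAction.orbit A ω ∧ O = MulAction.orbit G ω} := by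
  have hcommon : ∀ ω : Ω, orbit A ω = orbit G ω → ∀ ω' ∈ orbit G ω,
      orbit A ω' = orbit G ω' := fun ω h ω' hω' => by
    rw [orbit_eq_iff.mpr hω', orbit_eq_iff.mpr (orbit_subgroup_subset G ω hω'), h]
  calc ∑ a : A, (if x⁻¹ * a ∈ G then Set.ncard {ω : Ω | a • ω = ω} else 0)
      = ∑ ω : Ω, {a | a ∈ univ.filter (x⁻¹ * · ∈ G) ∧ a • ω = ω}.ncard := by
        rw [← sum_filter, sum_ncard_fixed_eq_sum_ncard_fixing]
    _ = ∑ ω with orbit A ω = orbit G ω, Nat.card (stabilizer G ω) := by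
        simp only [mem_filter, mem_univ, true_and, ncard_coset_fixing_eq hgen, sum_filter]
    _ = Nat.card G * {O | ∃ ω, orbit A ω = orbit G ω ∧ O = orbit G ω}.ncard :=
        sum_card_stabilizer_filter_eq_card_mul_ncard_orbits _ hcommon
    _ = _ := by
        congr 2
        ext O
        exact exists_congr fun ω =>
          ⟨fun ⟨h, hO⟩ => ⟨hO.trans h.symm, hO⟩, fun ⟨hA, hG⟩ => ⟨hA.symm.trans hG, hG⟩⟩

/-- `(1/|G|) Σ_{g ∈ xG} |Fix g|` equals the number of common `(A,G)`-orbits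
on `Ω`, i.e. the sum of fixed point counts over the coset `xG` equals `|G|` times the
number of `A`-orbits that are also `G`-orbits. -/
theorem sum_fixed_points_coset_eq_card_common_orbits
    (A Ω : Type*) [Group A] [Fintype A] [Fintype Ω] [Nonempty Ω] [MulAction A Ω]
    (G : Subgroup A) [G.Normal] (x : A)
    (hgen : ∀ a : A, ∃ k : ℤ,
      (QuotientGroup.mk a : A ⧸ G) = (QuotientGroup.mk x : A ⧸ G) ^ k) :
    ∑ a : A, (if x⁻¹ * a ∈ G then Set.ncard {ω : Ω | a • ω = ω} else 0) =
      Nat.card G *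
        Set.ncard {O : Set Ω | ∃ ω : Ω, O = MulAction.orbit A ω ∧ O = MulAction.orbit G ω} :=
  sum_fixed_points_coset_eq_card_common_orbits_general A Ω G x hgen
end

section
/- Let A act transitively on a finite set Ω with transitive normal subgroup G such that A/G is cyclic generated by xG. Then the following are equivalent: (a) no element of xG fixes two distinct points of Ω; (b) every element of xG has at least one fixed point; (c) every element of xG has exactly one fixed point. -/
open MulAction Finset
open scoped Classical

private lemma sum_eq_card_forall_eq' {ι : Type*} [Fintype ι] (f : ι → ℕ)
    (hsum : ∑ i : ι, f i = Fintype.card ι) :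
    ((∀ i, f i ≤ 1) → ∀ i, f i = 1) ∧ ((∀ i, 1 ≤ f i) → ∀ i, f i = 1) := by
  have hcard : (Finset.univ : Finset ι).card = Fintype.card ι := Finset.card_univ
  constructor
  · intro h i
    by_contra hne
    have hlt : f i < 1 := lt_of_le_of_ne (h i) hne
    have : ∑ j : ι, f j < ∑ _j : ι, 1 :=
      Finset.sum_lt_sum (fun j _ => h j) ⟨i, Finset.mem_univ i, hlt⟩
    simp only [Finset.sum_const, smul_eq_mul, mul_one, hcard, hsum] at this
    exact lt_irrefl _ this
  · intro h i
    by_contra hne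
    have hlt : 1 < f i := lt_of_le_of_ne (h i) (Ne.symm hne)
    have : ∑ _j : ι, 1 < ∑ j : ι, f j :=
      Finset.sum_lt_sum (fun j _ => h j) ⟨i, Finset.mem_univ i, hlt⟩
    simp only [Finset.sum_const, smul_eq_mul, mul_one, hcard, hsum] at this
    exact lt_irrefl _ this

/-- The average number of fixed points over the coset `xG` equals 1:
`∑_{g ∈ G} |Fix(xg)| = |G|`. -/
private lemma coset_fixed_sum
    (A Ω : Type*) [Group A] [Fintype A] [Fintype Ω] [Nonempty Ω] [MulAction A Ω]
    (G : Subgroup A) [MulAction.IsPretransitive G Ω] (x : A) :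
    ∑ g : G, (Finset.univ.filter fun ω : Ω => (x * (g : A)) • ω = ω).card
      = Fintype.card G := by
  have hswap : ∑ g : G, (univ.filter fun ω : Ω => (x * (g : A)) • ω = ω).card
      = ∑ ω : Ω, (univ.filter fun g : G => (x * (g : A)) • ω = ω).card := by
    simp_rw [Finset.card_filter]
    exact Finset.sum_comm
  rw [hswap]
  have hstab : ∀ ω : Ω, (univ.filter fun g : G => (x * (g : A)) • ω = ω).card
      = Fintype.card (stabilizer G ω) := by
    intro ω
    obtain ⟨g₀, hg₀⟩ := MulAction.exists_smul_eq G ω (x⁻¹ • ω)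
    rw [Fintype.card_subtype]
    refine Finset.card_bij' (fun g _ => g₀⁻¹ * g) (fun h _ => g₀ * h) ?_ ?_ ?_ ?_
    · intro g hg
      simp only [Finset.mem_filter, Finset.mem_univ, true_and] at hg ⊢
      rw [MulAction.mem_stabilizer_iff, Subgroup.smul_def]
      have hgω : (g : A) • ω = x⁻¹ • ω := by
        rw [eq_inv_smul_iff, ← mul_smul]; exact hg
      have hg₀' : (g₀ : A) • ω = x⁻¹ • ω := by rw [← Subgroup.smul_def, hg₀]
      have hcast : ((g₀⁻¹ * g : G) : A) = (g₀ : A)⁻¹ * (g : A) := by push_cast; ring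
      rw [hcast, mul_smul, hgω, ← hg₀', inv_smul_smul]
    · intro h hh
      simp only [Finset.mem_filter, Finset.mem_univ, true_and] at hh ⊢
      have hg₀' : (g₀ : A) • ω = x⁻¹ • ω := by rw [← Subgroup.smul_def, hg₀]
      have hh' : (h : A) • ω = ω := by
        rw [← Subgroup.smul_def]; exact hh
      have hcast : ((g₀ * h : G) : A) = (g₀ : A) * (h : A) := by push_cast; ring
      calc (x * ((g₀ * h : G) : A)) • ω = x • ((g₀ : A) • ((h : A) • ω)) := by
            rw [hcast, mul_smul, mul_smul]
        _ = x • ((g₀ : A) • ω) := by rw [hh']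
        _ = x • (x⁻¹ • ω) := by rw [hg₀']
        _ = ω := smul_inv_smul x ω
    · intro g _; group
    · intro h _; group
  simp_rw [hstab]
  have hΩpos : 0 < Fintype.card Ω := Fintype.card_pos
  refine Nat.eq_of_mul_eq_mul_right hΩpos ?_
  rw [Finset.sum_mul]
  have hterm : ∀ ω : Ω, Fintype.card (stabilizer G ω) * Fintype.card Ω
      = Fintype.card G := by
    intro ω
    have horb : MulAction.orbit G ω = Set.univ := MulAction.orbit_eq_univ G ω
    have : Fintype.card (MulAction.orbit G ω) = Fintype.card Ω :=
      Fintype.card_congr ((Equiv.setCongr horb).trans (Equiv.Set.univ Ω))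
    rw [← this, mul_comm]
    exact MulAction.card_orbit_mul_card_stabilizer_eq_card_group G ω
  simp_rw [hterm]
  rw [Finset.sum_const, Finset.card_univ, smul_eq_mul, mul_comm]

open MulAction

/-- Under the standing hypotheses (A, G transitive, A/G cyclic generated by
xG), the following are equivalent: (a) no element of `xG` fixes two distinct points;
(b) every element of `xG` has at least one fixed point; (c) every element of `xG` has
exactly one fixed point. -/
theorem coset_unique_fixed_point_tfae
    (A Ω : Type*) [Group A] [Fintype A] [Fintype Ω] [Nonempty Ω] [MulAction A Ω]
    [MulAction.IsPretransitive A Ω]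
    (G : Subgroup A) [G.Normal] [MulAction.IsPretransitive G Ω] (x : A)
    (hgen : ∀ a : A, ∃ k : ℤ,
      (QuotientGroup.mk a : A ⧸ G) = (QuotientGroup.mk x : A ⧸ G) ^ k) :
    ((∀ g ∈ G, ∀ ω ω' : Ω, (x * g) • ω = ω → (x * g) • ω' = ω' → ω = ω') ↔
        (∀ g ∈ G, ∃ ω : Ω, (x * g) • ω = ω)) ∧
      ((∀ g ∈ G, ∃ ω : Ω, (x * g) • ω = ω) ↔
        (∀ g ∈ G, ∃! ω : Ω, (x * g) • ω = ω)) := by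
  set n : A → ℕ := fun a => (Finset.univ.filter fun ω : Ω => a • ω = ω).card with hn
  have hsum : ∑ g : G, n (x * (g : A)) = Fintype.card G := coset_fixed_sum A Ω G x
  have hkey := sum_eq_card_forall_eq' (fun g : G => n (x * (g : A))) hsum
  -- helper: n a = 1 gives unique fixed point
  have hone : ∀ a : A, n a = 1 → ∃! ω : Ω, a • ω = ω := by
    intro a ha
    obtain ⟨ω, hω⟩ := Finset.card_eq_one.mp ha
    refine ⟨ω, ?_, ?_⟩
    · have : ω ∈ Finset.univ.filter fun ω : Ω => a • ω = ω := by
        rw [hω]; exact Finset.mem_singleton_self ω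
      exact (Finset.mem_filter.mp this).2
    · intro ω' hω'
      have : ω' ∈ Finset.univ.filter fun ω : Ω => a • ω = ω :=
        Finset.mem_filter.mpr ⟨Finset.mem_univ _, hω'⟩
      rw [hω] at this
      exact Finset.mem_singleton.mp this
  constructor
  · constructor
    · -- (a) → (b)
      intro ha g hg
      have hle : ∀ g : G, n (x * (g : A)) ≤ 1 := by
        intro g
        apply Finset.card_le_one.mpr
        intro ω hω ω' hω'
        exact ha g g.2 ω ω' (Finset.mem_filter.mp hω).2 (Finset.mem_filter.mp hω').2
      have h1 := hkey.1 hle ⟨g, hg⟩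
      obtain ⟨ω, hω, -⟩ := hone _ h1
      exact ⟨ω, hω⟩
    · -- (b) → (a)
      intro hb g hg ω ω' hω hω'
      have hge : ∀ g : G, 1 ≤ n (x * (g : A)) := by
        intro g
        obtain ⟨ω₀, hω₀⟩ := hb g g.2
        apply Finset.card_pos.mpr
        exact ⟨ω₀, Finset.mem_filter.mpr ⟨Finset.mem_univ _, hω₀⟩⟩
      have h1 := hkey.2 hge ⟨g, hg⟩
      obtain ⟨ω₀, -, huniq⟩ := hone _ h1
      rw [huniq ω hω, huniq ω' hω']
  · constructor
    · -- (b) → (c)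
      intro hb g hg
      have hge : ∀ g : G, 1 ≤ n (x * (g : A)) := by
        intro g
        obtain ⟨ω₀, hω₀⟩ := hb g g.2
        apply Finset.card_pos.mpr
        exact ⟨ω₀, Finset.mem_filter.mpr ⟨Finset.mem_univ _, hω₀⟩⟩
      exact hone _ (hkey.2 hge ⟨g, hg⟩)
    · -- (c) → (b)
      intro hc g hg
      obtain ⟨ω, hω, -⟩ := hc g hg
      exact ⟨ω, hω⟩
end

section
/- Let A act transitively on a finite set Ω of size n, with transitive normal subgroup G and A/G cyclic generated by xG. For 0 ≤ i ≤ n let s_i = |{g ∈ xG : |Fix(g)| = i}|/|G|, and for k ≥ 1 let r_k be the number of common (A,G)-orbits on Ω^(k), the set of k-tuples of pairwise distinct elements of Ω. Then for each 1 ≤ k ≤ n, Σ_{i=k}^{n} C(i,k) · s_i = r_k / k!. -/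
open MulAction
open scoped Classical

/-- The proportion `s_i` of elements in the coset `xG` having exactly `i` fixed
points on `Ω`. -/
noncomputable def cosetFixProportion (A Ω : Type*) [Group A] [MulAction A Ω]
    (G : Subgroup A) (x : A) (i : ℕ) : ℚ :=
  (Set.ncard {a : A | x⁻¹ * a ∈ G ∧ Set.ncard {ω : Ω | a • ω = ω} = i} : ℚ) / Nat.card G

/-- The number `r_k` of common `(A,G)`-orbits on `Ω^(k)`, the set of `k`-tuples of
pairwise distinct elements of `Ω` with the componentwise action. -/
noncomputable def commonTupleOrbits (A Ω : Type*) [Group A] [MulAction A Ω]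
    (G : Subgroup A) (k : ℕ) : ℕ :=
  Set.ncard {O : Set (Fin k → Ω) | ∃ f : Fin k → Ω, Function.Injective f ∧
    O = MulAction.orbit A f ∧ O = MulAction.orbit G f}

section Aux

open Pointwise Finset

variable {A Ω : Type*} [Group A] [Fintype A] [Fintype Ω] [MulAction A Ω]

private lemma ncard_setOf_eq_card_filter {α : Type*} [Fintype α] (p : α → Prop) :
    {a | p a}.ncard = (Finset.univ.filter p).card := by
  rw [Set.ncard_eq_toFinset_card', Set.toFinset_setOf]

/-- The number of injective tuples fixed by `a` is the descending factorial of the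
number of fixed points of `a`. -/
private lemma card_inj_fixed (a : A) (k : ℕ) :
    (Finset.univ.filter fun f : Fin k → Ω => Function.Injective f ∧ a • f = f).card
      = Nat.descFactorial (Finset.univ.filter fun ω : Ω => a • ω = ω).card k := by
  rw [← Fintype.card_subtype]
  have e : {f : Fin k → Ω // Function.Injective f ∧ a • f = f}
      ≃ (Fin k ↪ {ω : Ω // a • ω = ω}) :=
    { toFun := fun f => ⟨fun i => ⟨f.1 i, congrFun f.2.2 i⟩,
        fun i j h => f.2.1 (congrArg Subtype.val h)⟩
      invFun := fun g => ⟨fun i => (g i).1,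
        ⟨fun i j h => g.injective (Subtype.ext h), funext fun i => (g i).2⟩⟩
      left_inv := fun f => rfl
      right_inv := fun g => by ext i; rfl }
  rw [Fintype.card_congr e, Fintype.card_embedding_eq, Fintype.card_fin,
    Fintype.card_subtype]

/-- A tuple is fixed by some element of the coset `xG` iff its `A`-orbit equals its
`G`-orbit. -/
private lemma common_iff (G : Subgroup A) [hN : G.Normal] (x : A)
    (hgen : ∀ a : A, ∃ m : ℤ,
      (QuotientGroup.mk a : A ⧸ G) = (QuotientGroup.mk x : A ⧸ G) ^ m)
    {k : ℕ} (f : Fin k → Ω) :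
    (∃ a : A, x⁻¹ * a ∈ G ∧ a • f = f) ↔ orbit A f = orbit G f := by
  constructor
  · rintro ⟨a, haG, haf⟩
    have hxinvf : x⁻¹ • f = (x⁻¹ * a) • f := by
      conv_lhs => rw [← haf]
      rw [← mul_smul]
    have hainv : a⁻¹ • f = f := by
      conv_lhs => rw [← haf]
      rw [inv_smul_smul]
    have hmemS : ∀ g ∈ G, ∀ y ∈ orbit G f, g • y ∈ orbit G f := by
      rintro g hg y ⟨h, rfl⟩
      show g • ((h : A) • f) ∈ orbit G f
      rw [← mul_smul]
      exact ⟨⟨g * (h : A), mul_mem hg h.2⟩, rfl⟩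
    have hxmem : ∀ y ∈ orbit G f, x • y ∈ orbit G f := by
      rintro y ⟨h, rfl⟩
      show x • ((h : A) • f) ∈ orbit G f
      have e : ((x * (h : A) * x⁻¹) * (x * (x⁻¹ * a)⁻¹ * x⁻¹)) • f
          = x • ((h : A) • f) := by
        have hc : (x * (h : A) * x⁻¹) * (x * (x⁻¹ * a)⁻¹ * x⁻¹)
            = (x * (h : A)) * a⁻¹ := by group
        rw [hc, mul_smul, hainv, mul_smul]
      rw [← e]
      exact ⟨⟨_, mul_mem (hN.conj_mem _ h.2 x) (hN.conj_mem _ (inv_mem haG) x)⟩, rfl⟩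
    have hxinvmem : ∀ y ∈ orbit G f, x⁻¹ • y ∈ orbit G f := by
      rintro y ⟨h, rfl⟩
      show x⁻¹ • ((h : A) • f) ∈ orbit G f
      have e : ((x⁻¹ * (h : A) * x) * (x⁻¹ * a)) • f
          = x⁻¹ • ((h : A) • f) := by
        have hc : (x⁻¹ * (h : A) * x) * (x⁻¹ * a) = (x⁻¹ * (h : A)) * a := by group
        rw [hc, mul_smul, haf, mul_smul]
      rw [← e]
      have hc : x⁻¹ * (h : A) * x ∈ G := by
        have := hN.conj_mem _ h.2 x⁻¹
        simpa using this
      exact ⟨⟨_, mul_mem hc haG⟩, rfl⟩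
    have hxS : x • (orbit G f) = orbit G f := by
      apply Set.Subset.antisymm
      · rintro y ⟨z, hz, rfl⟩; exact hxmem z hz
      · intro y hy
        exact ⟨x⁻¹ • y, hxinvmem y hy, smul_inv_smul x y⟩
    have hxT : x ∈ stabilizer A (orbit G f : Set (Fin k → Ω)) :=
      mem_stabilizer_iff.2 hxS
    have hGT : ∀ g ∈ G, g ∈ stabilizer A (orbit G f : Set (Fin k → Ω)) := by
      intro g hg
      apply mem_stabilizer_iff.2
      apply Set.Subset.antisymm
      · rintro y ⟨z, hz, rfl⟩; exact hmemS g hg z hz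
      · intro y hy
        exact ⟨g⁻¹ • y, hmemS g⁻¹ (inv_mem hg) y hy, smul_inv_smul g y⟩
    apply Set.Subset.antisymm
    · rintro y ⟨b, rfl⟩
      show b • f ∈ orbit G f
      obtain ⟨m, hm⟩ := hgen b
      have hb : (x ^ m)⁻¹ * b ∈ G := by
        rw [← QuotientGroup.eq, QuotientGroup.mk_zpow]
        exact hm.symm
      have hbmem : b ∈ stabilizer A (orbit G f : Set (Fin k → Ω)) := by
        have hb2 : b = x ^ m * ((x ^ m)⁻¹ * b) := by group
        rw [hb2]
        exact mul_mem (zpow_mem hxT m) (hGT _ hb)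
      have hbS : b • (orbit G f : Set (Fin k → Ω)) = orbit G f :=
        mem_stabilizer_iff.1 hbmem
      rw [← hbS]
      exact Set.smul_mem_smul_set (mem_orbit_self f)
    · rintro y ⟨g, rfl⟩
      exact ⟨(g : A), rfl⟩
  · intro h
    have hx : x • f ∈ orbit G f := h ▸ mem_orbit f x
    obtain ⟨g, hg⟩ := hx
    have hg' : (g : A) • f = x • f := hg
    refine ⟨(g : A)⁻¹ * x, ?_, ?_⟩
    · have := hN.conj_mem _ (inv_mem g.2) x⁻¹
      simpa [mul_assoc] using this
    · rw [mul_smul, ← hg', inv_smul_smul]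

/-- The set of elements of `G` stabilizing `f`, counted as a `Finset` of `A`,
has the cardinality of the stabilizer of `f` in `G`. -/
private lemma stabG_card (G : Subgroup A) {k : ℕ} (f : Fin k → Ω) :
    (Finset.univ.filter fun a : A => a ∈ G ∧ a • f = f).card
      = Nat.card (stabilizer G f) := by
  rw [← Fintype.card_subtype, Nat.card_eq_fintype_card]
  exact (Fintype.card_congr
    { toFun := fun g => ⟨((g : G) : A), (g : G).2, g.2⟩
      invFun := fun a => ⟨⟨a.1, a.2.1⟩, a.2.2⟩
      left_inv := fun g => rfl
      right_inv := fun a => rfl }).symm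

/-- Orbit-counting: the sum over a `G`-orbit of the stabilizer sizes is `|G|`. -/
private lemma sum_stabG_card (G : Subgroup A) {k : ℕ} {O : Set (Fin k → Ω)}
    (f₀ : Fin k → Ω) (hO : O = orbit G f₀) :
    ∑ f ∈ O.toFinset, (Finset.univ.filter fun a : A => a ∈ G ∧ a • f = f).card
      = Nat.card G := by
  have hf₀ : f₀ ∈ O := hO ▸ mem_orbit_self f₀
  have hc0 : 0 < O.ncard := by
    rw [← Nat.card_coe_set_eq]
    have : Nonempty ↥O := ⟨⟨f₀, hf₀⟩⟩
    exact Nat.card_pos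
  have key : ∀ f ∈ O.toFinset,
      O.ncard * (Finset.univ.filter fun a : A => a ∈ G ∧ a • f = f).card
        = Nat.card G := by
    intro f hf
    rw [Set.mem_toFinset] at hf
    have horb : orbit G f = O := by
      rw [hO]; exact orbit_eq_iff.2 (hO ▸ hf)
    have h1 : (orbit G f).ncard = O.ncard := by rw [horb]
    rw [stabG_card]
    have := MulAction.card_orbit_mul_card_stabilizer_eq_card_group G f
    rw [← Nat.card_eq_fintype_card (α := ↥(orbit G f)),
      ← Nat.card_eq_fintype_card (α := ↥(stabilizer G f)),
      ← Nat.card_eq_fintype_card (α := ↥G)] at this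
    rw [← this, Nat.card_coe_set_eq, h1]
  have hsum : O.ncard *
      (∑ f ∈ O.toFinset, (Finset.univ.filter fun a : A => a ∈ G ∧ a • f = f).card)
        = O.ncard * Nat.card G := by
    rw [Finset.mul_sum, Finset.sum_congr rfl key, Finset.sum_const,
      ← Set.ncard_eq_toFinset_card', smul_eq_mul]
  exact Nat.eq_of_mul_eq_mul_left hc0 hsum

/-- Elements of the coset `xG` stabilizing `f` are in bijection with elements of `G`
stabilizing `f`, provided some element of the coset stabilizes `f`. -/
private lemma coset_stab_card (G : Subgroup A) (x : A) {k : ℕ} {f : Fin k → Ω}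
    {b : A} (hb : x⁻¹ * b ∈ G) (hbf : b • f = f) :
    ((Finset.univ.filter fun a : A => x⁻¹ * a ∈ G).filter fun a => a • f = f).card
      = (Finset.univ.filter fun a : A => a ∈ G ∧ a • f = f).card := by
  apply Finset.card_bij' (fun a _ => b⁻¹ * a) (fun c _ => b * c)
  · intro a ha
    rw [Finset.mem_filter, Finset.mem_filter] at ha
    obtain ⟨⟨-, ha1⟩, ha2⟩ := ha
    rw [Finset.mem_filter]
    refine ⟨Finset.mem_univ _, ?_, ?_⟩
    · have h2 : (x⁻¹ * b)⁻¹ * (x⁻¹ * a) = b⁻¹ * a := by group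
      rw [← h2]; exact mul_mem (inv_mem hb) ha1
    · rw [mul_smul, ha2, inv_smul_eq_iff, hbf]
  · intro c hc
    rw [Finset.mem_filter] at hc
    obtain ⟨-, hc1, hc2⟩ := hc
    rw [Finset.mem_filter, Finset.mem_filter]
    refine ⟨⟨Finset.mem_univ _, ?_⟩, ?_⟩
    · have h2 : x⁻¹ * (b * c) = (x⁻¹ * b) * c := by group
      rw [h2]; exact mul_mem hb hc1
    · rw [mul_smul, hc2, hbf]
  · intro a ha; group
  · intro c hc; group

end Aux

/-- For each `1 ≤ k ≤ n`, `Σ_{i=k}^{n} C(i,k)·s_i = r_k / k!`. -/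
theorem sum_choose_fix_proportion_eq_common_orbits_div_factorial
    (A Ω : Type*) [Group A] [Fintype A] [Fintype Ω] [Nonempty Ω] [MulAction A Ω]
    [MulAction.IsPretransitive A Ω]
    (G : Subgroup A) [G.Normal] [MulAction.IsPretransitive G Ω] (x : A)
    (hgen : ∀ a : A, ∃ k : ℤ,
      (QuotientGroup.mk a : A ⧸ G) = (QuotientGroup.mk x : A ⧸ G) ^ k)
    (k : ℕ) (hk1 : 1 ≤ k) (hkn : k ≤ Fintype.card Ω) :
    ∑ i ∈ Finset.Icc k (Fintype.card Ω),
        (i.choose k : ℚ) * cosetFixProportion A Ω G x i =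
      (commonTupleOrbits A Ω G k : ℚ) / (Nat.factorial k) := by
  classical
  set n := Fintype.card Ω with hn
  set fixc : A → ℕ := fun a => (Finset.univ.filter fun ω : Ω => a • ω = ω).card with hfixc
  set S : ℕ → Finset A :=
    fun i => Finset.univ.filter fun a => x⁻¹ * a ∈ G ∧ fixc a = i with hS
  set coset : Finset A := Finset.univ.filter fun a => x⁻¹ * a ∈ G with hcoset
  set injC : Finset (Fin k → Ω) :=
    Finset.univ.filter fun f => Function.Injective f ∧
      ∃ a : A, x⁻¹ * a ∈ G ∧ a • f = f with hinjC
  set oMap : (Fin k → Ω) → Set (Fin k → Ω) := fun f => orbit G f with hoMap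
  set img : Finset (Set (Fin k → Ω)) := injC.image oMap with himg
  have homap' : ∀ f : Fin k → Ω, oMap f = orbit G f := fun f => by rw [hoMap]
  -- Step 1: identify `cosetFixProportion` with `(S i).card / |G|`.
  have s1 : ∀ i, cosetFixProportion A Ω G x i = ((S i).card : ℚ) / Nat.card G := by
    intro i
    unfold cosetFixProportion
    have h1 : {a : A | x⁻¹ * a ∈ G ∧ Set.ncard {ω : Ω | a • ω = ω} = i}.ncard
        = (S i).card := by
      rw [ncard_setOf_eq_card_filter]
      have h2 : ∀ a : A,
          (x⁻¹ * a ∈ G ∧ Set.ncard {ω : Ω | a • ω = ω} = i)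
            ↔ (x⁻¹ * a ∈ G ∧ fixc a = i) := by
        intro a
        rw [ncard_setOf_eq_card_filter, hfixc]
      rw [hS]
      congr 1
      ext a
      simp only [Finset.mem_filter, Finset.mem_univ, true_and]
      exact h2 a
    rw [h1]
  -- Step 2: the key natural-number identity.
  have NK : (∑ i ∈ Finset.Icc k n, i.choose k * (S i).card) * k.factorial
      = (commonTupleOrbits A Ω G k) * Nat.card G := by
    -- (a) extend the sum to `range (n+1)`
    have ha : ∑ i ∈ Finset.Icc k n, i.choose k * (S i).card
        = ∑ i ∈ Finset.range (n + 1), i.choose k * (S i).card := by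
      apply Finset.sum_subset
      · intro i hi
        rw [Finset.mem_Icc] at hi
        rw [Finset.mem_range]
        omega
      · intro i hi hni
        rw [Finset.mem_range] at hi
        rw [Finset.mem_Icc] at hni
        have : i < k := by omega
        rw [Nat.choose_eq_zero_of_lt this, zero_mul]
    -- (b) rewrite as a sum over the coset
    have hb : ∑ i ∈ Finset.range (n + 1), i.choose k * (S i).card
        = ∑ a ∈ coset, (fixc a).choose k := by
      rw [← Finset.sum_fiberwise_of_maps_to (g := fixc) (t := Finset.range (n + 1))
        (fun a _ => Finset.mem_range.2 (Nat.lt_succ_of_le (Finset.card_filter_le _ _)))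
        (fun a => (fixc a).choose k)]
      apply Finset.sum_congr rfl
      intro i _
      have hfib : Finset.filter (fun a => fixc a = i) coset = S i := by
        rw [hcoset, Finset.filter_filter, hS]
      rw [hfib]
      have : ∀ a ∈ S i, (fixc a).choose k = i.choose k := by
        intro a ha
        rw [hS, Finset.mem_filter] at ha
        rw [ha.2.2]
      rw [Finset.sum_congr rfl this, Finset.sum_const, smul_eq_mul, mul_comm]
    -- (c)+(d): multiply by k! and count fixed injective tuples
    have hcd : (∑ a ∈ coset, (fixc a).choose k) * k.factorial
        = ∑ a ∈ coset,
            (Finset.univ.filter fun f : Fin k → Ω =>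
              Function.Injective f ∧ a • f = f).card := by
      rw [Finset.sum_mul]
      apply Finset.sum_congr rfl
      intro a _
      rw [card_inj_fixed a k, Nat.descFactorial_eq_factorial_mul_choose, mul_comm]
    -- (e): exchange the double count
    have he : ∑ a ∈ coset,
          (Finset.univ.filter fun f : Fin k → Ω =>
            Function.Injective f ∧ a • f = f).card
        = ∑ f ∈ Finset.univ.filter (fun f : Fin k → Ω => Function.Injective f),
            (coset.filter fun a => a • f = f).card := by
      simp only [Finset.card_filter]
      rw [Finset.sum_comm, Finset.sum_filter]
      apply Finset.sum_congr rfl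
      intro f _
      by_cases hP : Function.Injective f
      · simp only [hP, true_and, if_true]
      · simp only [hP, false_and, if_false, Finset.sum_const_zero]
    -- (f): only common tuples contribute
    have hf : ∑ f ∈ Finset.univ.filter (fun f : Fin k → Ω => Function.Injective f),
          (coset.filter fun a => a • f = f).card
        = ∑ f ∈ injC, (coset.filter fun a => a • f = f).card := by
      symm
      apply Finset.sum_subset
      · intro f hf
        rw [hinjC, Finset.mem_filter] at hf
        exact Finset.mem_filter.2 ⟨hf.1, hf.2.1⟩
      · intro f hf1 hf2
        rw [Finset.mem_filter] at hf1
        rw [Finset.card_eq_zero, Finset.filter_eq_empty_iff]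
        intro a ha
        rw [hcoset, Finset.mem_filter] at ha
        intro haf
        exact hf2 (Finset.mem_filter.2 ⟨Finset.mem_univ _, hf1.2, a, ha.2, haf⟩)
    -- (g): replace the coset-stabilizer count by the G-stabilizer count
    have hg : ∑ f ∈ injC, (coset.filter fun a => a • f = f).card
        = ∑ f ∈ injC, (Finset.univ.filter fun a : A => a ∈ G ∧ a • f = f).card := by
      apply Finset.sum_congr rfl
      intro f hf
      rw [hinjC, Finset.mem_filter] at hf
      obtain ⟨-, -, b, hb, hbf⟩ := hf
      exact coset_stab_card G x hb hbf
    -- (h): fiberwise sum over common orbits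
    have hcommon : ∀ f : Fin k → Ω,
        (∃ a : A, x⁻¹ * a ∈ G ∧ a • f = f) ↔ orbit A f = orbit G f :=
      fun f => common_iff G x hgen f
    have hfib2 : ∀ O ∈ img, injC.filter (fun f => oMap f = O) = O.toFinset := by
      intro O hO
      rw [himg, Finset.mem_image] at hO
      obtain ⟨f₀, hf₀, hf₀O⟩ := hO
      rw [hinjC, Finset.mem_filter] at hf₀
      obtain ⟨-, hinj₀, hcm₀⟩ := hf₀
      ext f'
      rw [Finset.mem_filter, hinjC, Finset.mem_filter, Set.mem_toFinset]
      constructor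
      · rintro ⟨⟨-, -, -⟩, horb⟩
        rw [← horb, homap']
        exact mem_orbit_self f'
      · intro hf'
        have hf'orb : f' ∈ orbit G f₀ := by
          rw [← homap' f₀, hf₀O]; exact hf'
        obtain ⟨g, hg⟩ := hf'orb
        have horbG : orbit G f' = O := by
          rw [← hf₀O, homap' f₀]
          exact orbit_eq_iff.2 ⟨g, hg⟩
        have hinj' : Function.Injective f' := by
          rw [← hg]
          exact fun i j h => hinj₀ (MulAction.injective (g : A) h)
        have horbA : orbit A f' = orbit A f₀ :=
          orbit_eq_iff.2 ⟨(g : A), hg⟩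
        have hcm' : ∃ a : A, x⁻¹ * a ∈ G ∧ a • f' = f' := by
          rw [hcommon f', horbA, horbG, ← hf₀O, homap' f₀]
          rw [hcommon f₀] at hcm₀
          exact hcm₀
        exact ⟨⟨Finset.mem_univ _, hinj', hcm'⟩, (homap' f').trans horbG⟩
    have hh : ∑ f ∈ injC, (Finset.univ.filter fun a : A => a ∈ G ∧ a • f = f).card
        = img.card * Nat.card G := by
      rw [← Finset.sum_fiberwise_of_maps_to (g := oMap) (t := img)
        (fun f hf => Finset.mem_image_of_mem oMap hf)]
      rw [Finset.sum_congr rfl (fun O hO => by rw [hfib2 O hO])]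
      have : ∀ O ∈ img,
          ∑ f ∈ O.toFinset,
            (Finset.univ.filter fun a : A => a ∈ G ∧ a • f = f).card
          = Nat.card G := by
        intro O hO
        rw [himg, Finset.mem_image] at hO
        obtain ⟨f₀, _, hf₀O⟩ := hO
        exact sum_stabG_card G f₀ ((hf₀O.symm).trans (homap' f₀))
      rw [Finset.sum_congr rfl this, Finset.sum_const, smul_eq_mul]
    -- (i): identify `img.card` with `commonTupleOrbits`
    have hi : img.card = commonTupleOrbits A Ω G k := by
      have hset : (↑img : Set (Set (Fin k → Ω)))
          = {O : Set (Fin k → Ω) | ∃ f : Fin k → Ω, Function.Injective f ∧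
              O = orbit A f ∧ O = orbit G f} := by
        ext O
        rw [himg]
        simp only [Finset.coe_image, Set.mem_image, Finset.mem_coe, Set.mem_setOf_eq]
        constructor
        · rintro ⟨f, hf, rfl⟩
          rw [hinjC, Finset.mem_filter] at hf
          obtain ⟨-, hinj, hcm⟩ := hf
          rw [hcommon f] at hcm
          exact ⟨f, hinj, by rw [homap' f]; exact hcm.symm, homap' f⟩
        · rintro ⟨f, hinj, hOA, hOG⟩
          refine ⟨f, ?_, (homap' f).trans hOG.symm⟩
          rw [hinjC, Finset.mem_filter]
          exact ⟨Finset.mem_univ _, hinj,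
            (hcommon f).2 (hOA ▸ hOG : orbit A f = orbit G f)⟩
      unfold commonTupleOrbits
      rw [← hset, Set.ncard_coe_finset]
    rw [ha, hb, hcd, he, hf, hg, hh, hi]
  -- Final assembly over ℚ.
  have hGpos : (0 : ℚ) < Nat.card G := by
    have : 0 < Nat.card G := Nat.card_pos
    exact_mod_cast this
  have hkf : (k.factorial : ℚ) ≠ 0 := by
    exact_mod_cast k.factorial_ne_zero
  have step : ∑ i ∈ Finset.Icc k n, (i.choose k : ℚ) * cosetFixProportion A Ω G x i
      = (∑ i ∈ Finset.Icc k n, (i.choose k : ℚ) * ((S i).card : ℚ)) / Nat.card G := by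
    rw [Finset.sum_div]
    apply Finset.sum_congr rfl
    intro i _
    rw [s1 i, mul_div_assoc]
  rw [step, div_eq_div_iff hGpos.ne' hkf]
  have : (∑ i ∈ Finset.Icc k n, (i.choose k : ℚ) * ((S i).card : ℚ))
      = ((∑ i ∈ Finset.Icc k n, i.choose k * (S i).card : ℕ) : ℚ) := by
    push_cast
    rfl
  rw [this]
  rw [← Nat.cast_mul, NK]
  push_cast
  ring
end

section
/- With the standing hypotheses (A, G transitive on Ω of size n, A/G cyclic generated by xG, s_i the fixed-point-count proportions on the coset xG, r_k the common orbit counts on distinct k-tuples), if r_2 ≥ 2 then s_0 ≥ 2/n. -/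
open MulAction
open scoped Classical
open scoped Pointwise

section Aux

variable {A X : Type*} [Group A] [MulAction A X]

/-- If some element of the coset `xG` fixes `p`, then the `A`-orbit of `p`
equals its `G`-orbit. -/
private lemma orbit_eq_of_coset_fix [Finite X] (G : Subgroup A) [G.Normal] (x : A)
    (hgen : ∀ a : A, ∃ k : ℤ,
      (QuotientGroup.mk a : A ⧸ G) = (QuotientGroup.mk x : A ⧸ G) ^ k)
    {p : X} {g : A} (hg : g ∈ G) (hfix : (x * g) • p = p) :
    orbit A p = orbit G p := by
  set O : Set X := orbit G p with hO
  have hmemO : ∀ {b : A}, b ∈ G → ∀ {q : X}, q ∈ O → b • q ∈ O := by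
    intro b hb q hq
    obtain ⟨⟨g', hg'⟩, rfl⟩ := hq
    exact ⟨⟨b * g', G.mul_mem hb hg'⟩, by simp [mul_smul]⟩
  have hpO : p ∈ O := mem_orbit_self p
  -- `x • p ∈ O`
  have hxp : x • p ∈ O := by
    have hh : x * g * x⁻¹ ∈ G := Subgroup.Normal.conj_mem ‹G.Normal› g hg x
    have : (x * g * x⁻¹) • (x • p) = p := by
      rw [smul_smul]
      simpa [mul_assoc] using hfix
    have := congrArg (fun q => (x * g * x⁻¹)⁻¹ • q) this
    simp only [inv_smul_smul] at this
    rw [this]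
    exact hmemO (G.inv_mem hh) hpO
  -- `x` maps `O` into `O`
  have hstep : x • O ⊆ O := by
    rw [Set.smul_set_subset_iff]
    intro q hq
    obtain ⟨⟨g', hg'⟩, rfl⟩ := hq
    have : x • ((g' : A) • p) = (x * g' * x⁻¹) • (x • p) := by
      simp [smul_smul, mul_assoc]
    show x • ((g' : A) • p) ∈ O
    rw [this]
    exact hmemO (Subgroup.Normal.conj_mem ‹G.Normal› g' hg' x) hxp
  have hOfin : O.Finite := Set.toFinite O
  have hxO : x • O = O :=
    Set.eq_of_subset_of_ncard_le hstep (by rw [Set.ncard_smul_set]) hOfin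
  have hxstab : x ∈ stabilizer A O := mem_stabilizer_iff.mpr hxO
  have hGstab : ∀ {b : A}, b ∈ G → b ∈ stabilizer A O := by
    intro b hb
    rw [mem_stabilizer_iff]
    apply Set.eq_of_subset_of_ncard_le _ (by rw [Set.ncard_smul_set]) hOfin
    rw [Set.smul_set_subset_iff]
    intro q hq
    exact hmemO hb hq
  -- every element of `A` stabilizes `O`
  have hstabA : ∀ a : A, a • O = O := by
    intro a
    obtain ⟨k, hk⟩ := hgen a
    rw [← QuotientGroup.mk_zpow] at hk
    have hGmem : a⁻¹ * x ^ k ∈ G := QuotientGroup.eq.mp hk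
    have ha : a = x ^ k * (a⁻¹ * x ^ k)⁻¹ := by group
    have : a ∈ stabilizer A O := by
      rw [ha]
      exact mul_mem (zpow_mem hxstab k) (inv_mem (hGstab hGmem))
    exact mem_stabilizer_iff.mp this
  refine le_antisymm ?_ (orbit_subgroup_subset G p)
  rintro q ⟨a, rfl⟩
  have : a • p ∈ a • O := Set.smul_mem_smul_set hpO
  rwa [hstabA a] at this

private lemma coset_fix_of_orbit_eq (G : Subgroup A) (x : A) {p : X}
    (heq : orbit A p = orbit G p) : ∃ g ∈ G, (x * g) • p = p := by
  have : x⁻¹ • p ∈ orbit A p := mem_orbit p x⁻¹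
  rw [heq] at this
  obtain ⟨⟨g, hg⟩, hgp⟩ := this
  refine ⟨g, hg, ?_⟩
  have : (g : A) • p = x⁻¹ • p := hgp
  rw [mul_smul, this, smul_inv_smul]

end Aux

section Count

variable {A X : Type*} [Group A] [Fintype A] [Fintype X] [MulAction A X]

/-- Counting the number of elements of the coset `xG` fixing a given point `p`. -/
private lemma coset_fix_card (G : Subgroup A) [G.Normal] (x : A)
    (hgen : ∀ a : A, ∃ k : ℤ,
      (QuotientGroup.mk a : A ⧸ G) = (QuotientGroup.mk x : A ⧸ G) ^ k)
    (p : X) :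
    ((Finset.univ.filter fun a : A => x⁻¹ * a ∈ G).filter fun a => a • p = p).card
      = if orbit A p = orbit G p then Nat.card G / Nat.card (orbit G p) else 0 := by
  by_cases hcom : orbit A p = orbit G p
  · rw [if_pos hcom]
    obtain ⟨g, hg, hfix⟩ := coset_fix_of_orbit_eq G x hcom
    -- the stabilizer count
    have hstab : Nat.card G / Nat.card (orbit G p) = Nat.card (stabilizer G p) := by
      have h := MulAction.card_orbit_mul_card_stabilizer_eq_card_group G p
      have hpos : 0 < Fintype.card (orbit G p) :=
        Fintype.card_pos_iff.mpr ⟨⟨p, mem_orbit_self p⟩⟩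
      rw [Nat.card_eq_fintype_card, Nat.card_eq_fintype_card, Nat.card_eq_fintype_card, ← h,
        Nat.mul_div_cancel_left _ hpos]
    rw [hstab]
    -- now a bijection between the coset stabilizer and the `G`-stabilizer
    have hcard : Nat.card (stabilizer G p)
        = ((Finset.univ.filter fun a : A => a ∈ G ∧ a • p = p)).card := by
      rw [Nat.card_eq_fintype_card, ← Fintype.card_subtype]
      exact Fintype.card_congr
        ⟨fun s => ⟨(s : G), (s : G).2, by
            have := s.2; rwa [mem_stabilizer_iff] at this⟩,
          fun t => ⟨⟨t.1, t.2.1⟩, by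
            rw [mem_stabilizer_iff]; exact t.2.2⟩,
          fun s => rfl, fun t => rfl⟩
    rw [hcard]
    apply Finset.card_bij' (fun a _ => (x * g)⁻¹ * a) (fun b _ => (x * g) * b)
    · intro a ha
      simp only [Finset.mem_filter, Finset.mem_univ, true_and] at ha ⊢
      constructor
      · have h1 : x⁻¹ * (x * g) ∈ G := by simpa using hg
        have : (x⁻¹ * (x * g))⁻¹ * (x⁻¹ * a) ∈ G := G.mul_mem (G.inv_mem h1) ha.1
        convert this using 1
        group
      · rw [mul_smul, ha.2, inv_smul_eq_iff, hfix]
    · intro b hb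
      simp only [Finset.mem_filter, Finset.mem_univ, true_and] at hb ⊢
      constructor
      · have : (x⁻¹ * (x * g)) * b ∈ G := G.mul_mem (by simpa using hg) hb.1
        convert this using 1
        group
      · rw [mul_smul, hb.2, hfix]
    · intro a _; group
    · intro b _; group
  · rw [if_neg hcom]
    rw [Finset.card_eq_zero, Finset.filter_eq_empty_iff]
    intro a ha
    simp only [Finset.mem_filter, Finset.mem_univ, true_and] at ha
    intro hfix
    exact hcom (orbit_eq_of_coset_fix G x hgen ha
      (by rw [show x * (x⁻¹ * a) = a by group]; exact hfix))

/-- The main counting identity: summing fixed points of an invariant set over the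
coset `xG` counts the common orbits inside the set, `|G|` times. -/
private lemma coset_fix_sum (G : Subgroup A) [G.Normal] (x : A)
    (hgen : ∀ a : A, ∃ k : ℤ,
      (QuotientGroup.mk a : A ⧸ G) = (QuotientGroup.mk x : A ⧸ G) ^ k)
    (S : Set X) (hS : ∀ (a : A), ∀ p ∈ S, a • p ∈ S) :
    ∑ a ∈ Finset.univ.filter (fun a : A => x⁻¹ * a ∈ G),
      Set.ncard {p : X | p ∈ S ∧ a • p = p}
    = Nat.card G *
        Set.ncard {O : Set X | ∃ p ∈ S, O = orbit A p ∧ O = orbit G p} := by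
  classical
  have hconv : ∀ a : A, Set.ncard {p : X | p ∈ S ∧ a • p = p}
      = (Finset.univ.filter fun p : X => p ∈ S ∧ a • p = p).card := fun a => by
    rw [Set.ncard_eq_toFinset_card', Set.toFinset_setOf]
  simp only [hconv]
  set C : Finset A := Finset.univ.filter (fun a : A => x⁻¹ * a ∈ G) with hC
  set Sfin : Finset X := Finset.univ.filter (fun p : X => p ∈ S) with hSfin
  -- swap the two sums
  have hswap : ∑ a ∈ C, (Finset.univ.filter fun p : X => p ∈ S ∧ a • p = p).card
      = ∑ p ∈ Sfin, (C.filter fun a => a • p = p).card := by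
    simp only [Finset.card_filter]
    rw [Finset.sum_comm]
    rw [hSfin, Finset.sum_filter]
    apply Finset.sum_congr rfl
    intro p _
    by_cases hp : p ∈ S <;> simp [hp]
  rw [hswap]
  -- evaluate each term
  have hterm : ∀ p ∈ Sfin, (C.filter fun a => a • p = p).card
      = if orbit A p = orbit G p then Nat.card G / Nat.card (orbit G p) else 0 :=
    fun p _ => coset_fix_card G x hgen p
  rw [Finset.sum_congr rfl hterm]
  rw [← Finset.sum_filter]
  set S' : Finset X := Sfin.filter (fun p => orbit A p = orbit G p) with hS'
  -- basic facts about S'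
  have hS'mem : ∀ {p : X}, p ∈ S' ↔ p ∈ S ∧ orbit A p = orbit G p := by
    intro p; simp [hS', hSfin]
  have horbmem : ∀ {p q : X}, p ∈ S' → q ∈ orbit G p → q ∈ S' ∧ orbit G q = orbit G p := by
    intro p q hp hq
    have h2 : orbit G q = orbit G p := orbit_eq_iff.mpr hq
    obtain ⟨⟨g, hg⟩, rfl⟩ := hq
    simp only [Subgroup.mk_smul] at h2 ⊢
    have hAq : orbit A (g • p) = orbit G (g • p) := by
      have : g • p ∈ orbit A p := mem_orbit p g
      rw [orbit_eq_iff.mpr this, (hS'mem.mp hp).2, ← h2]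
    exact ⟨hS'mem.mpr ⟨hS g p (hS'mem.mp hp).1, hAq⟩, h2⟩
  -- fiber over the orbit map
  set φ : X → Set X := fun p => orbit G p with hφ
  set T : Finset (Set X) := S'.image φ with hT
  have hmaps : ∀ p ∈ S', φ p ∈ T := fun p hp => Finset.mem_image_of_mem φ hp
  rw [← Finset.sum_fiberwise_of_maps_to hmaps]
  have hfiber : ∀ O ∈ T,
      ∑ p ∈ S'.filter (fun p => φ p = O), Nat.card G / Nat.card (orbit G p)
        = Nat.card G := by
    intro O hO
    obtain ⟨p₀, hp₀, rfl⟩ := Finset.mem_image.mp hO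
    have hfilter : S'.filter (fun p => φ p = φ p₀) = (orbit G p₀).toFinset := by
      ext q
      simp only [Finset.mem_filter, Set.mem_toFinset]
      constructor
      · rintro ⟨hq, hq2⟩
        have : q ∈ φ q := mem_orbit_self q
        rwa [hq2] at this
      · intro hq
        obtain ⟨h1, h2⟩ := horbmem hp₀ hq
        exact ⟨h1, h2⟩
    rw [hfilter]
    have hconst : ∀ q ∈ (orbit G p₀).toFinset,
        Nat.card G / Nat.card (orbit G q) = Nat.card G / Nat.card (orbit G p₀) := by
      intro q hq
      rw [Set.mem_toFinset] at hq
      rw [orbit_eq_iff.mpr hq]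
    rw [Finset.sum_congr rfl hconst, Finset.sum_const, smul_eq_mul]
    have hcard : (orbit G p₀).toFinset.card = Nat.card (orbit G p₀) := by
      rw [Nat.card_eq_fintype_card, Set.toFinset_card]
    rw [hcard]
    have hdvd : Nat.card (orbit G p₀) ∣ Nat.card G := by
      have h := MulAction.card_orbit_mul_card_stabilizer_eq_card_group G p₀
      rw [Nat.card_eq_fintype_card, Nat.card_eq_fintype_card]
      exact ⟨Fintype.card (stabilizer G p₀), h.symm⟩
    exact Nat.mul_div_cancel' hdvd
  rw [Finset.sum_congr rfl hfiber, Finset.sum_const, smul_eq_mul, mul_comm]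
  congr 1
  -- identify `T` with the set of common orbits
  have hset : {O : Set X | ∃ p ∈ S, O = orbit A p ∧ O = orbit G p} = ↑T := by
    ext O
    simp only [Set.mem_setOf_eq, Finset.mem_coe, hT, Finset.mem_image]
    constructor
    · rintro ⟨p, hp, hA, hG⟩
      exact ⟨p, hS'mem.mpr ⟨hp, by rw [← hA, ← hG]⟩, hG.symm⟩
    · rintro ⟨p, hp, rfl⟩
      obtain ⟨h1, h2⟩ := hS'mem.mp hp
      exact ⟨p, h1, h2.symm, rfl⟩
  rw [hset, Set.ncard_coe_finset]

end Count

section Fix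

variable {A Ω : Type*} [Group A] [Fintype Ω] [MulAction A Ω]

private lemma fix_count_one (a : A) :
    Set.ncard {ω : Ω | ω ∈ (Set.univ : Set Ω) ∧ a • ω = ω}
      = Set.ncard {ω : Ω | a • ω = ω} := by
  congr 1
  ext ω
  simp

private lemma fix_count_pairs (a : A) :
    Set.ncard {f : Fin 2 → Ω |
        f ∈ {f : Fin 2 → Ω | Function.Injective f} ∧ a • f = f}
      = Set.ncard {ω : Ω | a • ω = ω} * (Set.ncard {ω : Ω | a • ω = ω} - 1) := by
  classical
  have hF : Set.ncard {ω : Ω | a • ω = ω} = Fintype.card {ω : Ω // a • ω = ω} := by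
    rw [← Nat.card_coe_set_eq, Nat.card_eq_fintype_card]
    rfl
  have e : {f : Fin 2 → Ω // f ∈ {f : Fin 2 → Ω | Function.Injective f} ∧ a • f = f}
      ≃ (Fin 2 ↪ {ω : Ω // a • ω = ω}) :=
    { toFun := fun f => ⟨fun i => ⟨f.1 i, by
          have := congrFun f.2.2 i
          simpa [Pi.smul_apply] using this⟩,
        fun i j h => f.2.1 (by simpa using congrArg Subtype.val h)⟩
      invFun := fun e => ⟨fun i => (e i).1,
        fun i j h => e.injective (Subtype.ext h),
        funext fun i => by simpa [Pi.smul_apply] using (e i).2⟩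
      left_inv := fun f => rfl
      right_inv := fun e => by ext i; rfl }
  have hcard : Set.ncard {f : Fin 2 → Ω |
        f ∈ {f : Fin 2 → Ω | Function.Injective f} ∧ a • f = f}
      = Fintype.card {f : Fin 2 → Ω //
          f ∈ {f : Fin 2 → Ω | Function.Injective f} ∧ a • f = f} := by
    rw [← Nat.card_coe_set_eq, Nat.card_eq_fintype_card]
    exact Fintype.card_congr (Equiv.refl _)
  rw [hcard, Fintype.card_congr e, Fintype.card_embedding_eq, hF]
  simp [Nat.descFactorial]
  ring

end Fix

private lemma cast_pred_mul (m : ℕ) : ((m * (m - 1) : ℕ) : ℤ) = (m : ℤ) * ((m : ℤ) - 1) := by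
  cases m with
  | zero => simp
  | succ k => push_cast [Nat.succ_sub_one]; ring

/-- if `r_2 ≥ 2` then `s_0 ≥ 2/n`. -/
theorem derangement_proportion_ge_two_div_n
    (A Ω : Type*) [Group A] [Fintype A] [Fintype Ω] [MulAction A Ω]
    [MulAction.IsPretransitive A Ω]
    (G : Subgroup A) [G.Normal] [MulAction.IsPretransitive G Ω] (x : A)
    (hgen : ∀ a : A, ∃ k : ℤ,
      (QuotientGroup.mk a : A ⧸ G) = (QuotientGroup.mk x : A ⧸ G) ^ k)
    (hn : 3 ≤ Fintype.card Ω)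
    (hr2 : 2 ≤ commonTupleOrbits A Ω G 2) :
    (2 : ℚ) / Fintype.card Ω ≤ cosetFixProportion A Ω G x 0 := by
  classical
  set n : ℕ := Fintype.card Ω with hn'
  set N : ℕ := Nat.card G with hN'
  set F : A → ℕ := fun a => Set.ncard {ω : Ω | a • ω = ω} with hF'
  set C : Finset A := Finset.univ.filter (fun a : A => x⁻¹ * a ∈ G) with hC'
  set r2 : ℕ := commonTupleOrbits A Ω G 2 with hr2'
  have hΩne : Nonempty Ω := Fintype.card_pos_iff.mp (by omega)
  obtain ⟨ω₀⟩ := hΩne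
  -- first identity : ∑ F = N
  have h1 : ∑ a ∈ C, F a = N := by
    have h := coset_fix_sum G x hgen (Set.univ : Set Ω) (fun a p _ => Set.mem_univ _)
    have hone : {O : Set Ω | ∃ p ∈ (Set.univ : Set Ω), O = orbit A p ∧ O = orbit G p}
        = {Set.univ} := by
      ext O
      simp only [Set.mem_setOf_eq, Set.mem_univ, true_and, Set.mem_singleton_iff]
      constructor
      · rintro ⟨p, hA, -⟩
        rw [hA, orbit_eq_univ]
      · rintro rfl
        exact ⟨ω₀, (orbit_eq_univ A ω₀).symm, (orbit_eq_univ G ω₀).symm⟩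
    rw [hone, Set.ncard_singleton, mul_one] at h
    calc ∑ a ∈ C, F a
        = ∑ a ∈ Finset.univ.filter (fun a : A => x⁻¹ * a ∈ G),
            Set.ncard {ω : Ω | ω ∈ (Set.univ : Set Ω) ∧ a • ω = ω} :=
          Finset.sum_congr rfl fun a _ => (fix_count_one a).symm
      _ = Nat.card G := h
      _ = N := hN'.symm
  -- second identity : ∑ F (F - 1) = N * r2
  have h2 : ∑ a ∈ C, F a * (F a - 1) = N * r2 := by
    have hS : ∀ (a : A), ∀ p ∈ {f : Fin 2 → Ω | Function.Injective f},
        a • p ∈ {f : Fin 2 → Ω | Function.Injective f} := by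
      intro a f hf i j h
      apply hf
      have : a • f i = a • f j := by simpa [Pi.smul_apply] using h
      exact smul_left_cancel a this
    have h := coset_fix_sum G x hgen {f : Fin 2 → Ω | Function.Injective f} hS
    have hsets : {O : Set (Fin 2 → Ω) | ∃ p ∈ {f : Fin 2 → Ω | Function.Injective f},
        O = orbit A p ∧ O = orbit G p}
        = {O : Set (Fin 2 → Ω) | ∃ f : Fin 2 → Ω, Function.Injective f ∧
            O = MulAction.orbit A f ∧ O = MulAction.orbit G f} := rfl
    rw [hsets] at h
    have hrfl : commonTupleOrbits A Ω G 2
        = Set.ncard {O : Set (Fin 2 → Ω) | ∃ f : Fin 2 → Ω, Function.Injective f ∧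
            O = MulAction.orbit A f ∧ O = MulAction.orbit G f} := rfl
    calc ∑ a ∈ C, F a * (F a - 1)
        = ∑ a ∈ Finset.univ.filter (fun a : A => x⁻¹ * a ∈ G),
            Set.ncard {f : Fin 2 → Ω |
              f ∈ {f : Fin 2 → Ω | Function.Injective f} ∧ a • f = f} :=
          Finset.sum_congr rfl fun a _ => (fix_count_pairs a).symm
      _ = N * r2 := by rw [h, hN', hr2', hrfl]
  -- cardinality of the coset
  have hCcard : C.card = N := by
    have : C.card = (Finset.univ.filter fun a : A => a ∈ G).card := by
      apply Finset.card_bij' (fun a _ => x⁻¹ * a) (fun b _ => x * b)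
      · intro a ha
        simp only [hC', Finset.mem_filter, Finset.mem_univ, true_and] at ha ⊢
        exact ha
      · intro b hb
        simp only [hC', Finset.mem_filter, Finset.mem_univ, true_and] at hb ⊢
        simpa using hb
      · intro a _; group
      · intro b _; group
    rw [this, hN', Nat.card_eq_fintype_card, Fintype.card_subtype]
  -- bounds on F
  have hFle : ∀ a : A, F a ≤ n := by
    intro a
    have := Set.ncard_le_ncard (Set.subset_univ {ω : Ω | a • ω = ω}) (Set.toFinite _)
    rwa [Set.ncard_univ, Nat.card_eq_fintype_card] at this
  set T0 : ℕ := (C.filter fun a => F a = 0).card with hT0'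
  -- the key inequality over ℤ
  have key : (N : ℤ) * r2 ≤ (n : ℤ) * T0 := by
    have hsum : ∑ a ∈ C, (((F a : ℤ) - 1) * ((n : ℤ) - F a))
        = -((N : ℤ) * r2) := by
      have hpt : ∀ a ∈ C, ((F a : ℤ) - 1) * ((n : ℤ) - F a)
          = (n : ℤ) * F a - ((F a * (F a - 1) : ℕ) : ℤ) - n := by
        intro a _
        rw [cast_pred_mul]
        ring
      rw [Finset.sum_congr rfl hpt]
      rw [Finset.sum_sub_distrib, Finset.sum_sub_distrib, ← Finset.mul_sum,
        Finset.sum_const, nsmul_eq_mul, hCcard]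
      rw [← Nat.cast_sum, ← Nat.cast_sum, h1, h2]
      push_cast
      ring
    have hlow : ∑ a ∈ C, (if F a = 0 then (-(n : ℤ)) else 0)
        ≤ ∑ a ∈ C, (((F a : ℤ) - 1) * ((n : ℤ) - F a)) := by
      apply Finset.sum_le_sum
      intro a _
      by_cases h0 : F a = 0
      · rw [if_pos h0, h0]
        push_cast
        ring_nf
        try exact le_rfl
      · rw [if_neg h0]
        have h1' : (1 : ℤ) ≤ F a := by
          have : 1 ≤ F a := Nat.one_le_iff_ne_zero.mpr h0
          exact_mod_cast this
        have h2' : (F a : ℤ) ≤ n := by exact_mod_cast hFle a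
        nlinarith
    have hifsum : ∑ a ∈ C, (if F a = 0 then (-(n : ℤ)) else 0)
        = -((n : ℤ) * T0) := by
      rw [Finset.sum_ite, Finset.sum_const, Finset.sum_const]
      simp [hT0', mul_comm]
    rw [hifsum, hsum] at hlow
    linarith
  -- conclude
  have hNpos : 0 < N := Nat.card_pos
  have hnpos : 0 < n := by omega
  have hprop : cosetFixProportion A Ω G x 0 = (T0 : ℚ) / N := by
    unfold cosetFixProportion
    congr 1
    rw [Set.ncard_eq_toFinset_card', Set.toFinset_setOf]
    rw [hT0', hC', Finset.filter_filter]
    try norm_num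
  rw [hprop]
  rw [div_le_div_iff₀ (by exact_mod_cast hnpos) (by exact_mod_cast hNpos)]
  have : (2 : ℤ) * N ≤ (T0 : ℤ) * n := by
    have hr : (N : ℤ) * 2 ≤ (N : ℤ) * r2 := by
      have : (2 : ℤ) ≤ r2 := by exact_mod_cast hr2
      nlinarith [Int.ofNat_nonneg N]
    nlinarith
  exact_mod_cast this
end

section
/- With the standing hypotheses and μ the minimal degree of A, one has s_0 ≥ r_2/n + ((n-2)·r_2 - r_3)/(n(n-μ)), assuming r_2 ≥ 1. In particular, if r_2 = 1 and r_3 + 2 < μ, then s_0 > 2/n. -/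
open MulAction
open scoped Classical

section AuxLemmas

open scoped Pointwise

variable {A : Type*} [Group A] {X : Type*} [MulAction A X]

private lemma normal_smul_orbit (G : Subgroup A) [hN : G.Normal] (a : A) (f : X) :
    a • MulAction.orbit G f = MulAction.orbit G (a • f) := by
  ext y
  simp only [Set.mem_smul_set, MulAction.mem_orbit_iff]
  constructor
  · rintro ⟨z, ⟨g, rfl⟩, rfl⟩
    refine ⟨⟨a * g * a⁻¹, hN.conj_mem g g.2 a⟩, ?_⟩
    show (a * ↑g * a⁻¹) • (a • f) = a • (g : A) • f
    rw [smul_smul, smul_smul]; congr 1; group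
  · rintro ⟨g, rfl⟩
    refine ⟨(a⁻¹ * g * a) • f, ⟨⟨a⁻¹ * g * a, by simpa using hN.conj_mem g g.2 a⁻¹⟩, rfl⟩, ?_⟩
    show a • (a⁻¹ * ↑g * a) • f = (g : A) • (a • f)
    rw [smul_smul, smul_smul]; congr 1; group

private lemma orbitA_eq_orbitG (G : Subgroup A) [G.Normal] (x : A)
    (hgen : ∀ a : A, ∃ k : ℤ,
      (QuotientGroup.mk a : A ⧸ G) = (QuotientGroup.mk x : A ⧸ G) ^ k)
    {f : X} (h : x⁻¹ • f ∈ MulAction.orbit G f) :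
    MulAction.orbit A f = MulAction.orbit G f := by
  have hGstab : ∀ g : A, g ∈ G → g ∈ MulAction.stabilizer A (MulAction.orbit G f) := by
    intro g hg
    rw [MulAction.mem_stabilizer_iff, normal_smul_orbit]
    exact (MulAction.orbit_eq_iff.2 ⟨⟨g, hg⟩, rfl⟩)
  have hxinv : x⁻¹ ∈ MulAction.stabilizer A (MulAction.orbit G f) := by
    rw [MulAction.mem_stabilizer_iff, normal_smul_orbit]
    exact (MulAction.orbit_eq_iff.2 h)
  have hxs : x ∈ MulAction.stabilizer A (MulAction.orbit G f) := by
    simpa using (MulAction.stabilizer A (MulAction.orbit G f)).inv_mem hxinv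
  apply Set.eq_of_subset_of_subset
  · rintro - ⟨a, rfl⟩
    obtain ⟨k, hk⟩ := hgen a
    rw [← QuotientGroup.mk_zpow, QuotientGroup.eq] at hk
    have hmem : a ∈ MulAction.stabilizer A (MulAction.orbit G f) := by
      have h1 : x ^ k ∈ MulAction.stabilizer A (MulAction.orbit G f) := zpow_mem hxs k
      have h2 : (a⁻¹ * x ^ k)⁻¹ ∈ MulAction.stabilizer A (MulAction.orbit G f) :=
        inv_mem (hGstab _ hk)
      have : x ^ k * (a⁻¹ * x ^ k)⁻¹ = a := by group
      rw [← this]; exact mul_mem h1 h2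
    have := MulAction.mem_stabilizer_iff.1 hmem
    rw [← this]
    exact Set.smul_mem_smul_set (MulAction.mem_orbit_self f)
  · rintro - ⟨g, rfl⟩
    exact MulAction.mem_orbit f (g : A)

private lemma card_stab_filter [Fintype A] (G : Subgroup A) (f y : X)
    (hy : y ∈ MulAction.orbit G f) :
    (Finset.univ.filter (fun a : A => a ∈ G ∧ a • f = y)).card
      = Nat.card (MulAction.stabilizer G f) := by
  obtain ⟨g0, hg0'⟩ := hy
  have hg0 : (g0 : A) • f = y := hg0'
  rw [← Fintype.card_subtype, ← Nat.card_eq_fintype_card]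
  apply Nat.card_congr
  refine
    { toFun := fun a => ⟨⟨(g0 : A)⁻¹ * a, mul_mem (inv_mem g0.2) a.2.1⟩, ?_⟩
      invFun := fun s => ⟨(g0 : A) * s.1, mul_mem g0.2 s.1.2, ?_⟩
      left_inv := ?_, right_inv := ?_ }
  · show ((g0 : A)⁻¹ * a.1) • f = f
    rw [mul_smul, a.2.2, ← hg0]
    show (g0 : A)⁻¹ • (g0 : A) • f = f
    rw [inv_smul_smul]
  · show ((g0 : A) * s.1.1) • f = y
    have hs : (s.1 : A) • f = f := s.2
    rw [mul_smul, hs, hg0]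
  · intro a
    ext
    show (g0 : A) * ((g0 : A)⁻¹ * a.1) = a.1
    group
  · intro s
    ext
    show (g0 : A)⁻¹ * ((g0 : A) * s.1.1) = s.1.1
    group

private lemma sum_stab_orbit [Fintype A] [Fintype X] (G : Subgroup A) (f0 : X) :
    ∑ f ∈ (Set.toFinite (MulAction.orbit G f0)).toFinset,
        Nat.card (MulAction.stabilizer G f) = Nat.card G := by
  have hcongr : ∀ f ∈ (Set.toFinite (MulAction.orbit G f0)).toFinset,
      Nat.card (MulAction.stabilizer G f) = Nat.card (MulAction.stabilizer G f0) := by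
    intro f hf
    rw [Set.Finite.mem_toFinset] at hf
    exact Nat.card_congr (MulAction.stabilizerEquivStabilizerOfOrbitRel hf).toEquiv
  rw [Finset.sum_congr rfl hcongr, Finset.sum_const, smul_eq_mul]
  have hcard : (Set.toFinite (MulAction.orbit G f0)).toFinset.card
      = Nat.card (MulAction.orbit G f0) := by
    rw [← Set.ncard_eq_toFinset_card, Nat.card_coe_set_eq]
  rw [hcard]
  have := MulAction.card_orbit_mul_card_stabilizer_eq_card_group G f0
  simp only [← Nat.card_eq_fintype_card] at this
  exact this

private lemma coset_burnside [Fintype A] [Fintype X] (G : Subgroup A) [G.Normal] (x : A)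
    (hgen : ∀ a : A, ∃ k : ℤ,
      (QuotientGroup.mk a : A ⧸ G) = (QuotientGroup.mk x : A ⧸ G) ^ k)
    (S : Set X) (hS : ∀ (a : A), ∀ f ∈ S, a • f ∈ S) :
    ∑ a ∈ Finset.univ.filter (fun a : A => x⁻¹ * a ∈ G),
        (Finset.univ.filter (fun f : X => f ∈ S ∧ a • f = f)).card
      = Nat.card G * Set.ncard {O : Set X | ∃ f, f ∈ S ∧
          O = MulAction.orbit A f ∧ O = MulAction.orbit G f} := by
  classical
  have step1 : ∑ a ∈ Finset.univ.filter (fun a : A => x⁻¹ * a ∈ G),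
      (Finset.univ.filter (fun f : X => f ∈ S ∧ a • f = f)).card
      = ∑ f ∈ Finset.univ.filter (fun f : X => f ∈ S),
          (Finset.univ.filter (fun a : A => x⁻¹ * a ∈ G ∧ a • f = f)).card := by
    have l1 : ∑ a ∈ Finset.univ.filter (fun a : A => x⁻¹ * a ∈ G),
        (Finset.univ.filter (fun f : X => f ∈ S ∧ a • f = f)).card
        = ∑ a : A, ∑ f : X,
            (if x⁻¹ * a ∈ G ∧ (f ∈ S ∧ a • f = f) then 1 else 0) := by
      rw [Finset.sum_filter]
      apply Finset.sum_congr rfl; intro a _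
      by_cases h1 : x⁻¹ * a ∈ G
      · simp only [h1, if_true, true_and, Finset.card_filter]
      · simp [h1]
    have l2 : ∑ f ∈ Finset.univ.filter (fun f : X => f ∈ S),
        (Finset.univ.filter (fun a : A => x⁻¹ * a ∈ G ∧ a • f = f)).card
        = ∑ f : X, ∑ a : A,
            (if x⁻¹ * a ∈ G ∧ (f ∈ S ∧ a • f = f) then 1 else 0) := by
      rw [Finset.sum_filter]
      apply Finset.sum_congr rfl; intro f _
      by_cases h2 : f ∈ S
      · simp only [h2, if_true, Finset.card_filter]
        apply Finset.sum_congr rfl; intro a _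
        by_cases h1 : x⁻¹ * a ∈ G <;> by_cases h3 : a • f = f <;> simp [h1, h2, h3]
      · simp [h2]
    rw [l1, l2, Finset.sum_comm]
  rw [step1]
  have step2 : ∀ f : X, f ∈ S →
      (Finset.univ.filter (fun a : A => x⁻¹ * a ∈ G ∧ a • f = f)).card
      = if x⁻¹ • f ∈ MulAction.orbit G f
          then Nat.card (MulAction.stabilizer G f) else 0 := by
    intro f _
    have hbij : (Finset.univ.filter (fun a : A => x⁻¹ * a ∈ G ∧ a • f = f)).card
        = (Finset.univ.filter (fun g : A => g ∈ G ∧ g • f = x⁻¹ • f)).card := by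
      apply Finset.card_bij' (fun a _ => x⁻¹ * a) (fun g _ => x * g)
      · intro a ha
        simp only [Finset.mem_filter, Finset.mem_univ, true_and] at ha ⊢
        exact ⟨ha.1, by rw [mul_smul, ha.2]⟩
      · intro g hg
        simp only [Finset.mem_filter, Finset.mem_univ, true_and] at hg ⊢
        constructor
        · simpa using hg.1
        · rw [mul_smul, hg.2, smul_inv_smul]
      · intro a _; group
      · intro g _; group
    rw [hbij]
    by_cases hmem : x⁻¹ • f ∈ MulAction.orbit G f
    · rw [if_pos hmem]
      exact card_stab_filter G f (x⁻¹ • f) hmem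
    · rw [if_neg hmem]
      rw [Finset.card_eq_zero, Finset.filter_eq_empty_iff]
      rintro g - ⟨hgG, hgf⟩
      exact hmem ⟨⟨g, hgG⟩, hgf⟩
  rw [Finset.sum_congr rfl (fun f hf => step2 f (by simpa using hf))]
  rw [← Finset.sum_filter]
  set R : Finset (Set X) := (Set.toFinite {O : Set X | ∃ f, f ∈ S ∧
      O = MulAction.orbit A f ∧ O = MulAction.orbit G f}).toFinset with hR
  have hmaps : ∀ f ∈ (Finset.univ.filter (fun f : X => f ∈ S)).filter
      (fun f => x⁻¹ • f ∈ MulAction.orbit G f), MulAction.orbit G f ∈ R := by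
    intro f hf
    simp only [Finset.mem_filter, Finset.mem_univ, true_and] at hf
    rw [hR, Set.Finite.mem_toFinset]
    exact ⟨f, hf.1, (orbitA_eq_orbitG G x hgen hf.2).symm, rfl⟩
  rw [← Finset.sum_fiberwise_of_maps_to hmaps (fun f => Nat.card (MulAction.stabilizer G f))]
  have fiber : ∀ O ∈ R,
      ∑ f ∈ ((Finset.univ.filter (fun f : X => f ∈ S)).filter
          (fun f => x⁻¹ • f ∈ MulAction.orbit G f)).filter
          (fun f => MulAction.orbit G f = O),
        Nat.card (MulAction.stabilizer G f) = Nat.card G := by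
    intro O hO
    rw [hR, Set.Finite.mem_toFinset] at hO
    obtain ⟨f1, hf1S, hOA, hOG⟩ := hO
    have hfiber : ((Finset.univ.filter (fun f : X => f ∈ S)).filter
          (fun f => x⁻¹ • f ∈ MulAction.orbit G f)).filter
          (fun f => MulAction.orbit G f = O)
        = (Set.toFinite (MulAction.orbit G f1)).toFinset := by
      ext f
      simp only [Finset.mem_filter, Finset.mem_univ, true_and, Set.Finite.mem_toFinset]
      constructor
      · rintro ⟨⟨-, -⟩, hOf⟩
        have h : f ∈ MulAction.orbit G f := MulAction.mem_orbit_self f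
        rwa [hOf, hOG] at h
      · intro hf
        obtain ⟨g, hg⟩ := hf
        have hg' : (g : A) • f1 = f := hg
        subst hg'
        have hGeq : MulAction.orbit G ((g : A) • f1) = MulAction.orbit G f1 :=
          MulAction.orbit_eq_iff.2 ⟨g, rfl⟩
        have hAeq : MulAction.orbit A ((g : A) • f1) = MulAction.orbit A f1 :=
          MulAction.orbit_eq_iff.2 (MulAction.mem_orbit f1 (g : A))
        have hOf : MulAction.orbit G ((g : A) • f1) = O := hGeq.trans hOG.symm
        refine ⟨⟨hS _ _ hf1S, ?_⟩, hOf⟩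
        rw [hOf, hOA, ← hAeq]
        exact MulAction.mem_orbit _ _
    rw [hfiber]
    exact sum_stab_orbit G f1
  rw [Finset.sum_congr rfl fiber, Finset.sum_const, smul_eq_mul, mul_comm]
  congr 1
  rw [hR, ← Set.ncard_eq_toFinset_card]

private lemma fixed_tuples_card {Ω : Type*} [Fintype Ω] [MulAction A Ω] (a : A) (k : ℕ) :
    (Finset.univ.filter (fun f : Fin k → Ω => Function.Injective f ∧ a • f = f)).card
      = Nat.descFactorial (Set.ncard {ω : Ω | a • ω = ω}) k := by
  rw [← Fintype.card_subtype]
  have e : {f : Fin k → Ω // Function.Injective f ∧ a • f = f}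
      ≃ (Fin k ↪ {ω : Ω // a • ω = ω}) :=
    { toFun := fun f =>
        ⟨fun i => ⟨f.1 i, congrFun f.2.2 i⟩,
          fun i j h => f.2.1 (Subtype.ext_iff.1 h)⟩
      invFun := fun e =>
        ⟨fun i => (e i : Ω),
          ⟨fun i j h => e.injective (Subtype.ext h), funext fun i => (e i).2⟩⟩
      left_inv := fun f => rfl
      right_inv := fun e => by ext i; rfl }
  rw [Fintype.card_congr e, Fintype.card_embedding_eq, Fintype.card_fin]
  have : Set.ncard {ω : Ω | a • ω = ω} = Fintype.card {ω : Ω // a • ω = ω} := by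
    rw [Set.ncard_eq_toFinset_card', Set.toFinset_card]
    exact Fintype.card_congr (Equiv.refl _)
  rw [this]

private lemma coset_card [Fintype A] (G : Subgroup A) (x : A) :
    (Finset.univ.filter (fun a : A => x⁻¹ * a ∈ G)).card = Nat.card G := by
  rw [← Fintype.card_subtype, ← Nat.card_eq_fintype_card]
  refine Nat.card_congr
    { toFun := fun a => ⟨x⁻¹ * a.1, a.2⟩
      invFun := fun g => ⟨x * g.1, by simp [g.2]⟩
      left_inv := fun a => by ext; show x * (x⁻¹ * a.1) = a.1; group
      right_inv := fun g => by ext; show x⁻¹ * (x * g.1) = g.1; group }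

private lemma castD2 (i : ℕ) : (Nat.descFactorial i 2 : ℚ) = i * (i - 1) := by
  cases i with
  | zero => simp [Nat.descFactorial]
  | succ n =>
    simp only [Nat.descFactorial]
    push_cast [Nat.succ_sub_one]
    ring

private lemma castD3 (i : ℕ) : (Nat.descFactorial i 3 : ℚ) = i * (i - 1) * (i - 2) := by
  match i with
  | 0 => simp [Nat.descFactorial]
  | 1 => simp [Nat.descFactorial]
  | (n+2) =>
    simp only [Nat.descFactorial]
    have h1 : n + 2 - 1 = n + 1 := rfl
    have h2 : n + 2 - 2 = n := rfl
    rw [h1, h2]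
    push_cast
    ring

private lemma orbit_one_univ {M Ω : Type*} [Group M] [MulAction M Ω]
    [MulAction.IsPretransitive M Ω] (f : Fin 1 → Ω) :
    MulAction.orbit M f = Set.univ := by
  apply Set.eq_univ_of_forall
  intro f'
  obtain ⟨g, hg⟩ := MulAction.exists_smul_eq M (f 0) (f' 0)
  refine ⟨g, ?_⟩
  show g • f = f'
  funext i
  have hi : i = 0 := Subsingleton.elim i 0
  subst hi
  exact hg

private lemma common_orbits_one {Ω : Type*} [MulAction A Ω] [Nonempty Ω]
    [MulAction.IsPretransitive A Ω] (G : Subgroup A) [MulAction.IsPretransitive G Ω] :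
    commonTupleOrbits A Ω G 1 = 1 := by
  have hset : {O : Set (Fin 1 → Ω) | ∃ f : Fin 1 → Ω, Function.Injective f ∧
      O = MulAction.orbit A f ∧ O = MulAction.orbit G f} = {Set.univ} := by
    ext O
    simp only [Set.mem_setOf_eq, Set.mem_singleton_iff]
    constructor
    · rintro ⟨f, -, rfl, -⟩
      exact orbit_one_univ f
    · rintro rfl
      obtain ⟨ω⟩ := (inferInstance : Nonempty Ω)
      exact ⟨fun _ => ω, fun i j _ => Subsingleton.elim i j,
        (orbit_one_univ _).symm, (orbit_one_univ _).symm⟩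
  rw [commonTupleOrbits, hset, Set.ncard_singleton]

end AuxLemmas
/-- with `μ` the minimal degree of `A` and `r_2 ≥ 1`,
`s_0 ≥ r_2/n + ((n-2)·r_2 - r_3)/(n(n-μ))`; in particular if `r_2 = 1` and
`r_3 + 2 < μ` then `s_0 > 2/n`. -/
theorem derangement_proportion_lower_bound_minimal_degree
    (A Ω : Type*) [Group A] [Fintype A] [Fintype Ω] [MulAction A Ω]
    [MulAction.IsPretransitive A Ω]
    (G : Subgroup A) [G.Normal] [MulAction.IsPretransitive G Ω] (x : A)
    (hgen : ∀ a : A, ∃ k : ℤ,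
      (QuotientGroup.mk a : A ⧸ G) = (QuotientGroup.mk x : A ⧸ G) ^ k)
    (hx : x ∉ G)
    (μ : ℕ) (hμ2 : 2 ≤ μ) (hμn : μ < Fintype.card Ω)
    (hμmin : ∀ a : A, a ≠ 1 → μ ≤ Set.ncard {ω : Ω | a • ω ≠ ω})
    (hr2 : 1 ≤ commonTupleOrbits A Ω G 2) :
    (commonTupleOrbits A Ω G 2 : ℚ) / Fintype.card Ω +
        (((Fintype.card Ω : ℚ) - 2) * commonTupleOrbits A Ω G 2 -
            commonTupleOrbits A Ω G 3) /
          ((Fintype.card Ω : ℚ) * ((Fintype.card Ω : ℚ) - μ)) ≤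
        cosetFixProportion A Ω G x 0 ∧
      (commonTupleOrbits A Ω G 2 = 1 → commonTupleOrbits A Ω G 3 + 2 < μ →
        (2 : ℚ) / Fintype.card Ω < cosetFixProportion A Ω G x 0) := by
  classical
  set n := Fintype.card Ω with hn
  set m := n - μ with hm
  set gc := Nat.card G with hgc
  have hg0 : 0 < gc := Nat.card_pos
  have hn0 : 0 < n := by omega
  have hm0 : 0 < m := by omega
  have hnemp : Nonempty Ω := by
    rw [← Fintype.card_pos_iff]; exact hn0
  set r2 := commonTupleOrbits A Ω G 2 with hr2d
  set r3 := commonTupleOrbits A Ω G 3 with hr3d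
  set C := Finset.univ.filter (fun a : A => x⁻¹ * a ∈ G) with hC
  set F : A → ℕ := fun a => Set.ncard {ω : Ω | a • ω = ω} with hF
  set c : ℕ → ℕ := fun i => (C.filter (fun a => F a = i)).card with hc
  -- F is bounded by m on C
  have hFa : ∀ a ∈ C, F a ≤ m := by
    intro a ha
    rw [hC, Finset.mem_filter] at ha
    have hane : a ≠ 1 := by
      rintro rfl
      exact hx (by simpa using G.inv_mem ha.2)
    have hmoved := hμmin a hane
    have hsplit : F a + Set.ncard {ω : Ω | a • ω ≠ ω} = n := by
      have hcompl : {ω : Ω | a • ω = ω}ᶜ = {ω : Ω | a • ω ≠ ω} := by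
        ext ω; simp
      rw [hF]
      calc Set.ncard {ω : Ω | a • ω = ω} + Set.ncard {ω : Ω | a • ω ≠ ω}
          = Set.ncard {ω : Ω | a • ω = ω} + Set.ncard {ω : Ω | a • ω = ω}ᶜ := by
            rw [hcompl]
        _ = Nat.card Ω := Set.ncard_add_ncard_compl _
        _ = n := by rw [Nat.card_eq_fintype_card, hn]
    omega
  -- the coset Burnside moment identities
  have burn : ∀ k : ℕ,
      ∑ a ∈ C, Nat.descFactorial (F a) k = gc * commonTupleOrbits A Ω G k := by
    intro k
    have hS : ∀ (a : A), ∀ f ∈ {f : Fin k → Ω | Function.Injective f},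
        a • f ∈ {f : Fin k → Ω | Function.Injective f} := by
      intro a f hf i j hij
      exact hf (MulAction.injective a (hij : a • f i = a • f j))
    have hsets : {O : Set (Fin k → Ω) | ∃ f, f ∈ {f : Fin k → Ω | Function.Injective f} ∧
          O = MulAction.orbit A f ∧ O = MulAction.orbit G f}
        = {O : Set (Fin k → Ω) | ∃ f : Fin k → Ω, Function.Injective f ∧
          O = MulAction.orbit A f ∧ O = MulAction.orbit G f} := rfl
    have h := coset_burnside G x hgen {f : Fin k → Ω | Function.Injective f} hS
    have hclean : ∑ a ∈ Finset.univ.filter (fun a : A => x⁻¹ * a ∈ G),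
        (Finset.univ.filter (fun f : Fin k → Ω => Function.Injective f ∧ a • f = f)).card
        = Nat.card G * commonTupleOrbits A Ω G k := by
      rw [commonTupleOrbits, ← hsets]
      convert h using 3
      exact (Finset.filter_congr_decidable _ _ _).trans
        (Finset.filter_congr_decidable _ _ _).symm
    rw [hC, hgc, ← hclean]
    refine Finset.sum_congr rfl fun a _ => ?_
    simp only [hF]
    exact (fixed_tuples_card a k).symm
  -- pass to fibers of F
  have fib : ∀ k : ℕ, ∑ a ∈ C, Nat.descFactorial (F a) k
      = ∑ i ∈ Finset.range (m + 1), c i * Nat.descFactorial i k := by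
    intro k
    rw [← Finset.sum_fiberwise_of_maps_to
      (fun a ha => Finset.mem_range.2 (Nat.lt_succ_of_le (hFa a ha)))
      (fun a => Nat.descFactorial (F a) k)]
    refine Finset.sum_congr rfl fun i _ => ?_
    calc ∑ a ∈ C.filter (fun a => F a = i), Nat.descFactorial (F a) k
        = ∑ a ∈ C.filter (fun a => F a = i), Nat.descFactorial i k :=
          Finset.sum_congr rfl (fun a ha => by rw [(Finset.mem_filter.1 ha).2])
      _ = c i * Nat.descFactorial i k := by
          rw [Finset.sum_const, smul_eq_mul, hc]
  -- the four moment identities over ℕ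
  have e0 : ∑ i ∈ Finset.range (m + 1), c i = gc := by
    have h0 := fib 0
    simp only [Nat.descFactorial_zero, mul_one, Finset.sum_const, smul_eq_mul] at h0
    rw [← h0, hC, coset_card, hgc]
  have e1 : ∑ i ∈ Finset.range (m + 1), c i * i = gc := by
    have h1 := (fib 1).symm.trans (burn 1)
    simp only [Nat.descFactorial_one] at h1
    rw [h1, common_orbits_one, mul_one]
  have e2 : ∑ i ∈ Finset.range (m + 1), c i * Nat.descFactorial i 2 = gc * r2 :=
    (fib 2).symm.trans (burn 2)
  have e3 : ∑ i ∈ Finset.range (m + 1), c i * Nat.descFactorial i 3 = gc * r3 :=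
    (fib 3).symm.trans (burn 3)
  -- cast to ℚ
  have q0 : ∑ i ∈ Finset.range (m + 1), (c i : ℚ) = gc := by exact_mod_cast e0
  have q1 : ∑ i ∈ Finset.range (m + 1), (c i : ℚ) * i = gc := by exact_mod_cast e1
  have q2 : ∑ i ∈ Finset.range (m + 1), (c i : ℚ) * ((i : ℚ) * ((i : ℚ) - 1))
      = (gc : ℚ) * r2 := by
    calc ∑ i ∈ Finset.range (m + 1), (c i : ℚ) * ((i : ℚ) * ((i : ℚ) - 1))
        = ∑ i ∈ Finset.range (m + 1), ((c i * Nat.descFactorial i 2 : ℕ) : ℚ) := by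
          refine Finset.sum_congr rfl fun i _ => ?_
          push_cast [castD2]
          ring
      _ = ((gc * r2 : ℕ) : ℚ) := by rw [← Nat.cast_sum, e2]
      _ = (gc : ℚ) * r2 := by push_cast; ring
  have q3 : ∑ i ∈ Finset.range (m + 1),
        (c i : ℚ) * ((i : ℚ) * ((i : ℚ) - 1) * ((i : ℚ) - 2))
      = (gc : ℚ) * r3 := by
    calc ∑ i ∈ Finset.range (m + 1), (c i : ℚ) * ((i : ℚ) * ((i : ℚ) - 1) * ((i : ℚ) - 2))
        = ∑ i ∈ Finset.range (m + 1), ((c i * Nat.descFactorial i 3 : ℕ) : ℚ) := by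
          refine Finset.sum_congr rfl fun i _ => ?_
          push_cast [castD3]
          ring
      _ = ((gc * r3 : ℕ) : ℚ) := by rw [← Nat.cast_sum, e3]
      _ = (gc : ℚ) * r3 := by push_cast; ring
  -- the quadratic-style sum E
  set E : ℚ := ∑ i ∈ Finset.range (m + 1),
    (c i : ℚ) * (((i : ℚ) - 1) * ((n : ℚ) - i) * ((m : ℚ) - i)) with hE
  have Eval : E = (gc : ℚ) * (r3 - ((n : ℚ) + m - 2) * r2) := by
    have expand : ∀ i ∈ Finset.range (m + 1),
        (c i : ℚ) * (((i : ℚ) - 1) * ((n : ℚ) - i) * ((m : ℚ) - i))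
        = ((n : ℚ) * m) * ((c i : ℚ) * i) - ((n : ℚ) * m) * (c i : ℚ)
          - ((n : ℚ) + m - 2) * ((c i : ℚ) * ((i : ℚ) * ((i : ℚ) - 1)))
          + (c i : ℚ) * ((i : ℚ) * ((i : ℚ) - 1) * ((i : ℚ) - 2)) := by
      intro i _
      ring
    rw [hE, Finset.sum_congr rfl expand]
    simp only [Finset.sum_add_distrib, Finset.sum_sub_distrib, ← Finset.mul_sum]
    rw [q0, q1, q2, q3]
    ring
  have Ebound : -((c 0 : ℚ) * ((n : ℚ) * m)) ≤ E := by
    rw [hE, Finset.sum_range_succ']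
    have hpos : 0 ≤ ∑ i ∈ Finset.range m,
        (c (i + 1) : ℚ) * ((((i + 1 : ℕ) : ℚ) - 1) * ((n : ℚ) - ((i + 1 : ℕ) : ℚ))
          * ((m : ℚ) - ((i + 1 : ℕ) : ℚ))) := by
      apply Finset.sum_nonneg
      intro i hi
      have hi' : i + 1 ≤ m := Finset.mem_range.1 hi
      have him : ((i + 1 : ℕ) : ℚ) ≤ (m : ℚ) := by exact_mod_cast hi'
      have hin : ((i + 1 : ℕ) : ℚ) ≤ (n : ℚ) := by
        have : i + 1 ≤ n := le_trans hi' (by omega)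
        exact_mod_cast this
      have h1 : (0 : ℚ) ≤ ((i + 1 : ℕ) : ℚ) - 1 := by push_cast; linarith
      apply mul_nonneg (Nat.cast_nonneg _)
      apply mul_nonneg (mul_nonneg h1 (by linarith)) (by linarith)
    have hlast : (c 0 : ℚ) * ((((0 : ℕ) : ℚ) - 1) * ((n : ℚ) - ((0 : ℕ) : ℚ))
        * ((m : ℚ) - ((0 : ℕ) : ℚ))) = -((c 0 : ℚ) * ((n : ℚ) * m)) := by
      push_cast
      ring
    rw [hlast]
    linarith
  have key : (gc : ℚ) * (((n : ℚ) + m - 2) * r2 - r3) ≤ (c 0 : ℚ) * ((n : ℚ) * m) := by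
    rw [Eval] at Ebound
    linarith
  -- identify s_0
  have s0eq : cosetFixProportion A Ω G x 0 = (c 0 : ℚ) / gc := by
    rw [cosetFixProportion]
    have hsetc : {a : A | x⁻¹ * a ∈ G ∧ Set.ncard {ω : Ω | a • ω = ω} = 0}
        = ↑(C.filter (fun a => F a = 0)) := by
      ext a
      simp [hC, hF, Finset.mem_filter]
    rw [hsetc, Set.ncard_coe_finset]
  -- cast facts
  have hmcast : ((m : ℕ) : ℚ) = (n : ℚ) - (μ : ℚ) := by
    rw [hm]
    push_cast [Nat.cast_sub hμn.le]
    ring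
  have hnq : (0 : ℚ) < (n : ℚ) := by exact_mod_cast hn0
  have hmq : (0 : ℚ) < (m : ℚ) := by exact_mod_cast hm0
  have hgq : (0 : ℚ) < (gc : ℚ) := by exact_mod_cast hg0
  -- part 1
  have part1 : (r2 : ℚ) / (n : ℚ) +
      (((n : ℚ) - 2) * r2 - r3) / ((n : ℚ) * ((n : ℚ) - μ))
      ≤ cosetFixProportion A Ω G x 0 := by
    rw [s0eq, ← hmcast]
    rw [div_add_div _ _ (ne_of_gt hnq) (ne_of_gt (mul_pos hnq hmq)),
      div_le_div_iff₀ (mul_pos hnq (mul_pos hnq hmq)) hgq]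
    have hkey' := mul_le_mul_of_nonneg_left key (le_of_lt hnq)
    nlinarith [hkey']
  refine ⟨part1, ?_⟩
  -- part 2
  intro h2 h3
  have hδ : (0 : ℚ) < ((μ : ℚ) - r3 - 2) := by
    have : (r3 + 2 : ℕ) < μ := by omega
    have := (Nat.cast_lt (α := ℚ)).2 this
    push_cast at this
    linarith
  have h2q : (r2 : ℚ) = 1 := by exact_mod_cast h2
  have hμq : (μ : ℚ) = (n : ℚ) - (m : ℚ) := by linarith [hmcast]
  have hdiff : (r2 : ℚ) / (n : ℚ) +
      (((n : ℚ) - 2) * r2 - r3) / ((n : ℚ) * ((n : ℚ) - μ))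
      - 2 / (n : ℚ) = ((μ : ℚ) - r3 - 2) / ((n : ℚ) * (m : ℚ)) := by
    rw [← hmcast, h2q, hμq]
    field_simp
    ring
  have hposd : (0 : ℚ) < ((μ : ℚ) - r3 - 2) / ((n : ℚ) * (m : ℚ)) :=
    div_pos hδ (mul_pos hnq hmq)
  linarith [part1, hdiff, hposd]
end

section
/- Let A act transitively on Ω, G ⊴ A transitive, A/G cyclic generated by xG, and suppose the number r_2 of common (A,G)-orbits on ordered pairs of distinct points equals 1. Choose (a,b) in this common orbit, let A_{a,b} be the stabilizer of both a and b in A, and let r be the number of orbits of A_{a,b} on Ω. Then r_3 + 2 ≤ r, where r_3 is the number of common (A,G)-orbits on ordered triples of distinct points. -/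
open MulAction
open scoped Classical

/-!
Since `A(a,b)` is the only common orbit on distinct pairs, and the pairs of leading entries of a
common triple orbit form a common pair orbit, every common triple orbit contains a triple
`(a, b, c)` with `c ∉ {a, b}`. Moreover the `A`-orbit of `(a, b, c)` only depends on the
`A_{a,b}`-orbit of `c`, so the common triple orbits are covered by the `A_{a,b}`-orbits other than
the fixed points `{a}` and `{b}`.
-/

open Function

section CommonOrbits

variable {A Ω : Type*} [Group A] [MulAction A Ω] (G : Subgroup A)

theorem orbit_map_eq_subgroup_orbit {α β : Type*} [MulAction A α] [MulAction A β]
    (φ : α →[A] β) {y : α} (hy : orbit A y = orbit G y) :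
    orbit A (φ y) = orbit G (φ y) := by
  refine (orbit_subgroup_subset G _).antisymm' ?_
  rintro _ ⟨g, rfl⟩
  obtain ⟨h, hh⟩ : g • y ∈ orbit G y := hy ▸ mem_orbit y g
  refine ⟨h, ?_⟩
  change (h : A) • φ y = g • φ y
  rw [← map_smul, ← map_smul]
  exact congrArg φ hh

theorem orbit_eq_of_commonTupleOrbits_eq_one {k : ℕ} (hk : commonTupleOrbits A Ω G k = 1)
    {u v : Fin k → Ω} (hu : Injective u) (hv : Injective v)
    (huG : orbit A u = orbit G u) (hvG : orbit A v = orbit G v) :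
    orbit A u = orbit A v := by
  obtain ⟨O, hO⟩ := Set.ncard_eq_one.mp hk
  have hu' : orbit A u ∈ ({O} : Set _) := hO ▸ ⟨u, hu, rfl, huG⟩
  have hv' : orbit A v ∈ ({O} : Set _) := hO ▸ ⟨v, hv, rfl, hvG⟩
  exact hu'.trans hv'.symm

theorem exists_orbit_eq_orbit_triple (hr2 : commonTupleOrbits A Ω G 2 = 1) {a b : Ω}
    (hab : a ≠ b) (hcommon : orbit A (a, b) = orbit G (a, b))
    {f : Fin 3 → Ω} (hf : Injective f) (hfG : orbit A f = orbit G f) :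
    ∃ c, c ≠ a ∧ c ≠ b ∧ orbit A f = orbit A ![a, b, c] := by
  let pair : Ω × Ω →[A] (Fin 2 → Ω) :=
    { toFun := fun p => ![p.1, p.2]
      map_smul' := fun _ _ => by ext i; fin_cases i <;> rfl }
  let initial : (Fin 3 → Ω) →[A] (Fin 2 → Ω) :=
    { toFun := fun f => ![f 0, f 1]
      map_smul' := fun _ _ => by ext i; fin_cases i <;> rfl }
  have hsame : orbit A ![f 0, f 1] = orbit A ![a, b] :=
    orbit_eq_of_commonTupleOrbits_eq_one G hr2 (injective_pair_iff_ne.mpr (hf.ne (by decide)))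
      (injective_pair_iff_ne.mpr hab) (orbit_map_eq_subgroup_orbit G initial hfG)
      (orbit_map_eq_subgroup_orbit G pair hcommon)
  obtain ⟨g, hg⟩ : ![a, b] ∈ orbit A ![f 0, f 1] := hsame ▸ mem_orbit_self _
  have ha : g • f 0 = a := congrFun hg 0
  have hb : g • f 1 = b := congrFun hg 1
  refine ⟨g • f 2, ?_, ?_, ?_⟩
  · rw [← ha]
    exact (MulAction.injective g).ne (hf.ne (by decide))
  · rw [← hb]
    exact (MulAction.injective g).ne (hf.ne (by decide))
  · rw [← orbit_smul g f]
    congr 1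
    ext i
    fin_cases i <;> simp [ha, hb]

end CommonOrbits

section TwoPointStabilizer

variable {A Ω : Type*} [Group A] [MulAction A Ω]

theorem eq_of_mk_eq_mk_of_le_stabilizer {H : Subgroup A} {a c : Ω} (hH : H ≤ stabilizer A a)
    (hca : (Quotient.mk'' c : orbitRel.Quotient H Ω) = Quotient.mk'' a) : c = a := by
  obtain ⟨h, rfl⟩ := orbitRel_apply.mp (Quotient.eq''.mp hca)
  exact hH h.2

theorem orbit_triple_smul_eq {a b : Ω} {h : A} (hh : h ∈ stabilizer A a ⊓ stabilizer A b)
    (c : Ω) : orbit A ![a, b, h • c] = orbit A ![a, b, c] := by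
  obtain ⟨ha, hb⟩ := Subgroup.mem_inf.mp hh
  rw [← orbit_smul h ![a, b, c]]
  congr 1
  ext i
  fin_cases i <;> simp [mem_stabilizer_iff.mp ha, mem_stabilizer_iff.mp hb]

variable (A) in
def tripleOrbitOfClass (a b : Ω) :
    orbitRel.Quotient ↥(stabilizer A a ⊓ stabilizer A b) Ω → Set (Fin 3 → Ω) :=
  Quotient.lift (fun c => orbit A ![a, b, c]) fun _ d ⟨h, hd⟩ => hd ▸ orbit_triple_smul_eq h.2 d

theorem commonTupleOrbits_three_le_ncard_compl [Finite Ω] (G : Subgroup A)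
    (hr2 : commonTupleOrbits A Ω G 2 = 1) {a b : Ω} (hab : a ≠ b)
    (hcommon : orbit A (a, b) = orbit G (a, b)) :
    commonTupleOrbits A Ω G 3 ≤
      ({Quotient.mk'' a, Quotient.mk'' b}ᶜ :
        Set (orbitRel.Quotient ↥(stabilizer A a ⊓ stabilizer A b) Ω)).ncard := by
  refine (Set.ncard_le_ncard (t := tripleOrbitOfClass A a b '' _) ?_).trans Set.ncard_image_le
  rintro O ⟨f, hf, rfl, hfG⟩
  obtain ⟨c, hca, hcb, hc⟩ := exists_orbit_eq_orbit_triple G hr2 hab hcommon hf hfG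
  refine ⟨Quotient.mk'' c, ?_, hc.symm⟩
  simp only [Set.mem_compl_iff, Set.mem_insert_iff, Set.mem_singleton_iff, not_or]
  exact ⟨mt (eq_of_mk_eq_mk_of_le_stabilizer inf_le_left) hca,
    mt (eq_of_mk_eq_mk_of_le_stabilizer inf_le_right) hcb⟩

end TwoPointStabilizer

theorem common_triple_orbits_add_two_le_two_point_stabilizer_orbits_general
    (A Ω : Type*) [Group A] [Fintype Ω] [MulAction A Ω]
    (G : Subgroup A)
    (hr2 : commonTupleOrbits A Ω G 2 = 1)
    (a b : Ω) (hab : a ≠ b)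
    (hcommon : MulAction.orbit A ((a, b) : Ω × Ω) = MulAction.orbit G ((a, b) : Ω × Ω)) :
    commonTupleOrbits A Ω G 3 + 2 ≤
      Nat.card (orbitRel.Quotient
        (↥(MulAction.stabilizer A a ⊓ MulAction.stabilizer A b)) Ω) := by
  set fixedClasses : Set (orbitRel.Quotient ↥(stabilizer A a ⊓ stabilizer A b) Ω) :=
    {Quotient.mk'' a, Quotient.mk'' b}
  have hfixed : fixedClasses.ncard = 2 :=
    Set.ncard_pair fun h => hab (eq_of_mk_eq_mk_of_le_stabilizer inf_le_right h)
  calc commonTupleOrbits A Ω G 3 + 2 ≤ fixedClassesᶜ.ncard + fixedClasses.ncard := by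
        rw [hfixed]
        gcongr
        exact commonTupleOrbits_three_le_ncard_compl G hr2 hab hcommon
    _ = _ := by rw [add_comm, Set.ncard_add_ncard_compl]

/-- if `r_2 = 1` and `(a,b)` lies in the common `(A,G)`-orbit of
distinct pairs, then `r_3 + 2 ≤ r`, where `r` is the number of orbits of the
two-point stabilizer `A_{a,b}` on `Ω`. -/
theorem common_triple_orbits_add_two_le_two_point_stabilizer_orbits
    (A Ω : Type*) [Group A] [Fintype A] [Fintype Ω] [MulAction A Ω]
    [MulAction.IsPretransitive A Ω]
    (G : Subgroup A) [G.Normal] [MulAction.IsPretransitive G Ω] (x : A)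
    (hgen : ∀ a : A, ∃ k : ℤ,
      (QuotientGroup.mk a : A ⧸ G) = (QuotientGroup.mk x : A ⧸ G) ^ k)
    (hr2 : commonTupleOrbits A Ω G 2 = 1)
    (a b : Ω) (hab : a ≠ b)
    (hcommon : MulAction.orbit A ((a, b) : Ω × Ω) = MulAction.orbit G ((a, b) : Ω × Ω)) :
    commonTupleOrbits A Ω G 3 + 2 ≤
      Nat.card (orbitRel.Quotient
        (↥(MulAction.stabilizer A a ⊓ MulAction.stabilizer A b)) Ω) :=
  common_triple_orbits_add_two_le_two_point_stabilizer_orbits_general A Ω G hr2 a b hab hcommon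
end

section
/- Let A, G be transitive permutation groups on a finite set Ω with G ⊴ A and A/G cyclic generated by xG. Suppose there is an integer s > 1 such that every element of the coset xG either has no fixed points or has at least s fixed points. Then the proportion of derangements in xG is at least 1 - 1/s ≥ 1/2. -/
/-!
For a point `ω`, the elements `g ∈ G` with `(x * g) • ω = ω` are those sending `ω` to
`x⁻¹ • ω`, a coset of the stabilizer of `ω` in `G`; by transitivity of `G` it has `|G| / |Ω|`
elements. Double counting the pairs `(g, ω)` therefore gives `∑_{g ∈ G} |Fix(x g)| = |G|`.
Every element of `xG` that is not a derangement contributes at least `s` to this sum, so there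
are at most `|G| / s` of them.
-/

open Finset MulAction
open scoped Classical

namespace MulAction

variable {G Ω : Type*} [Group G] [MulAction G Ω]

theorem ncard_setOf_smul_eq_mul_card [Finite G] [IsPretransitive G Ω] (a b : Ω) :
    {g : G | g • a = b}.ncard * Nat.card Ω = Nat.card G := by
  obtain ⟨g₀, rfl⟩ := exists_smul_eq G a b
  have : {g : G | g • a = g₀ • a} = (g₀ * ·) '' (stabilizer G a : Set G) := by
    ext g
    simp [mem_stabilizer_iff, ← mul_smul, smul_eq_iff_eq_inv_smul]
  rw [this, Set.ncard_image_of_injective _ (mul_right_injective g₀), ← Nat.card_coe_set_eq,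
    ← index_stabilizer_of_transitive G a]
  exact Subgroup.card_mul_index _

theorem sum_ncard_setOf_smul_eq [Fintype G] [Fintype Ω] [Nonempty Ω] [IsPretransitive G Ω]
    (σ : Ω → Ω) : ∑ g : G, {ω | g • ω = σ ω}.ncard = Nat.card G := by
  refine Nat.eq_of_mul_eq_mul_right (Nat.card_pos (α := Ω)) ?_
  calc (∑ g : G, {ω | g • ω = σ ω}.ncard) * Nat.card Ω
      = (∑ ω : Ω, {g : G | g • ω = σ ω}.ncard) * Nat.card Ω := by
        simp only [Set.ncard_eq_toFinset_card', Set.toFinset_ofPred, card_filter]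
        rw [sum_comm]
    _ = ∑ _ω : Ω, Nat.card G := by
        rw [sum_mul]
        exact sum_congr rfl fun ω _ => ncard_setOf_smul_eq_mul_card ω (σ ω)
    _ = Nat.card G * Nat.card Ω := by
        rw [sum_const, smul_eq_mul, mul_comm, card_univ, ← Nat.card_eq_fintype_card]

theorem ncard_fixedBy_eq_zero_iff [Finite Ω] (g : G) :
    (fixedBy Ω g).ncard = 0 ↔ ∀ ω : Ω, g • ω ≠ ω := by
  rw [Set.ncard_eq_zero, Set.eq_empty_iff_forall_notMem]
  rfl

end MulAction

namespace Subgroup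

variable {A : Type*} [Group A] (G : Subgroup A)

theorem ncard_setOf_inv_mul_mem_and (x : A) (p : A → Prop) :
    {a : A | x⁻¹ * a ∈ G ∧ p a}.ncard = {g : G | p (x * g)}.ncard := by
  have : {a : A | x⁻¹ * a ∈ G ∧ p a} = (fun g : G => x * g) '' {g : G | p (x * g)} := by
    ext a
    constructor
    · rintro ⟨hG, hp⟩
      exact ⟨⟨x⁻¹ * a, hG⟩, by simpa using hp, by simp⟩
    · rintro ⟨g, hp, rfl⟩
      simpa using hp
  rw [this, Set.ncard_image_of_injective _ fun g h hgh => Subtype.ext (mul_left_cancel hgh)]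

theorem sum_ncard_fixedBy_mul [Fintype G] {Ω : Type*} [Fintype Ω] [Nonempty Ω] [MulAction A Ω]
    [IsPretransitive G Ω] (x : A) :
    ∑ g : G, (fixedBy Ω (x * g)).ncard = Nat.card G := by
  convert sum_ncard_setOf_smul_eq (G := G) (x⁻¹ • · : Ω → Ω) using 3 with g
  ext ω
  simp [mul_smul, eq_inv_smul_iff, Subgroup.smul_def]

end Subgroup

theorem mul_card_filter_ne_zero_le_sum {ι : Type*} (t : Finset ι) (f : ι → ℕ) {m : ℕ}
    (h : ∀ i ∈ t, f i ≠ 0 → m ≤ f i) : m * #{i ∈ t | f i ≠ 0} ≤ ∑ i ∈ t, f i := by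
  rw [← sum_filter_ne_zero, mul_comm, ← smul_eq_mul]
  exact card_nsmul_le_sum _ _ _ fun i hi => h i (mem_filter.1 hi).1 (mem_filter.1 hi).2

theorem one_sub_one_div_le_div_add {d e s : ℚ} (hs : 0 < s) (hde : 0 < d + e)
    (h : s * e ≤ d + e) : 1 - 1 / s ≤ d / (d + e) := by
  rw [sub_le_iff_le_add, div_add_div _ _ hde.ne' hs.ne', le_div_iff₀ (mul_pos hde hs)]
  linarith

theorem derangement_proportion_ge_one_sub_inv_general
    (A Ω : Type*) [Group A] [Fintype A] [Fintype Ω] [Nonempty Ω] [MulAction A Ω]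
    (G : Subgroup A) [MulAction.IsPretransitive G Ω] (x : A)
    (s : ℕ) (hs : 1 < s)
    (hfix : ∀ g ∈ G, (∀ ω : Ω, (x * g) • ω ≠ ω) ∨
      s ≤ Set.ncard {ω : Ω | (x * g) • ω = ω}) :
    (1 : ℚ) - 1 / s ≤
        (Set.ncard {a : A | x⁻¹ * a ∈ G ∧ ∀ ω : Ω, a • ω ≠ ω} : ℚ) / Nat.card G ∧
      (1 : ℚ) / 2 ≤ (1 : ℚ) - 1 / s := by
  set fix : G → ℕ := fun g => (fixedBy Ω (x * g)).ncard
  have hnonderangements : s * #{g | fix g ≠ 0} ≤ Nat.card G := by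
    rw [← G.sum_ncard_fixedBy_mul (Ω := Ω) x]
    refine mul_card_filter_ne_zero_le_sum _ fix fun g _ hg => (hfix g g.2).resolve_left ?_
    rwa [← ncard_fixedBy_eq_zero_iff]
  have hderangements :
      {a : A | x⁻¹ * a ∈ G ∧ ∀ ω : Ω, a • ω ≠ ω}.ncard = #{g | fix g = 0} := by
    simp [G.ncard_setOf_inv_mul_mem_and, fix, Set.ncard_eq_toFinset_card']
  have hsplit : #{g | fix g = 0} + #{g | fix g ≠ 0} = Nat.card G := by
    rw [card_filter_add_card_filter_not, card_univ, Nat.card_eq_fintype_card]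
  constructor
  · rw [hderangements, ← hsplit, Nat.cast_add]
    exact one_sub_one_div_le_div_add (by positivity) (by exact_mod_cast hsplit ▸ Nat.card_pos)
      (by exact_mod_cast hsplit ▸ hnonderangements)
  · have : (1 : ℚ) / s ≤ 1 / 2 := one_div_le_one_div_of_le two_pos (by exact_mod_cast hs)
    linarith

/-- if every element of the coset `xG` is either a derangement or has at
least `s > 1` fixed points, then the proportion of derangements in `xG` is at least
`1 - 1/s ≥ 1/2`. -/
theorem derangement_proportion_ge_one_sub_inv
    (A Ω : Type*) [Group A] [Fintype A] [Fintype Ω] [Nonempty Ω] [MulAction A Ω]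
    [MulAction.IsPretransitive A Ω]
    (G : Subgroup A) [G.Normal] [MulAction.IsPretransitive G Ω] (x : A)
    (hgen : ∀ a : A, ∃ k : ℤ,
      (QuotientGroup.mk a : A ⧸ G) = (QuotientGroup.mk x : A ⧸ G) ^ k)
    (s : ℕ) (hs : 1 < s)
    (hfix : ∀ g ∈ G, (∀ ω : Ω, (x * g) • ω ≠ ω) ∨
      s ≤ Set.ncard {ω : Ω | (x * g) • ω = ω}) :
    (1 : ℚ) - 1 / s ≤
        (Set.ncard {a : A | x⁻¹ * a ∈ G ∧ ∀ ω : Ω, a • ω ≠ ω} : ℚ) / Nat.card G ∧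
      (1 : ℚ) / 2 ≤ (1 : ℚ) - 1 / s :=
  derangement_proportion_ge_one_sub_inv_general A Ω G x s hs hfix
end

section
/- Let A be a Frobenius group of degree n acting transitively on Ω with |A| = n(n-1)/2 or n(n-1) (point stabilizers acting fixed-point-freely outside the fixed point). Then the Frobenius kernel N is an elementary abelian p-group for some prime p; hence n = p^a is a prime power, and if |A| = n(n-1)/2 with n > 2 then p is odd. -/
/-!
Burnside's lemma shows that the set `D` of derangements has `n - 1` elements. The stabilizer
`A_α`, of order `c`, acts freely by conjugation on `D` (a nontrivial `h ∈ A_α` commuting with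
`x ∈ D` would also fix `x • α ≠ α`), so every conjugation-stable subset of `D` has size divisible
by `c`, while `n - 1` is `c` or `2c` by the order hypothesis. Applied to the class of `g ∈ D`, of
size `|A| / |C_A(g)|`, this gives `|C_A(g)| = n`, so `C_A(g) = {1} ∪ D`; hence `N = {1} ∪ D` is
an abelian subgroup. Applied to the subgroup of `N` killed by the least prime `q ∣ n`, whose
order divides `n` and is `1` mod `c`, it shows that this subgroup is all of `N`. So `N` is a
`q`-group, `n = |N|` is a power of `q`, and `q` is odd when `n = 2c + 1`.
-/

open MulAction

theorem MulAction.nat_card_dvd_ncard_of_free {G X : Type*} [Group G] [MulAction G X] (S : Set X)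
    (hS : ∀ g : G, ∀ x ∈ S, g • x ∈ S) (hfree : ∀ g : G, ∀ x ∈ S, g • x = x → g = 1) :
    Nat.card G ∣ S.ncard := by
  let T : SubMulAction G X := ⟨S, fun g x hx => hS g x hx⟩
  have hstab (x : T) : stabilizer G x = ⊥ :=
    (Subgroup.eq_bot_iff_forall _).2 fun g hg => hfree g x x.2 (congrArg Subtype.val hg)
  rw [← Nat.card_coe_set_eq]
  change Nat.card G ∣ Nat.card T
  rw [Nat.card_congr (selfEquivOrbitsQuotientProd hstab), Nat.card_prod]
  exact dvd_mul_left _ _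

theorem Subgroup.exists_forall_mem_iff_pow_eq_one {G : Type*} [Group G] (N : Subgroup G)
    (hN : ∀ x ∈ N, ∀ y ∈ N, Commute x y) (q : ℕ) :
    ∃ Q : Subgroup G, ∀ x, x ∈ Q ↔ x ∈ N ∧ x ^ q = 1 :=
  ⟨{ carrier := {x | x ∈ N ∧ x ^ q = 1}
     one_mem' := ⟨N.one_mem, one_pow q⟩
     mul_mem' := fun ha hb => ⟨N.mul_mem ha.1 hb.1,
       by rw [(hN _ ha.1 _ hb.1).mul_pow, ha.2, hb.2, one_mul]⟩
     inv_mem' := fun ha => ⟨N.inv_mem ha.1, by rw [inv_pow, ha.2, inv_one]⟩ },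
   fun _ => Iff.rfl⟩

theorem Nat.eq_of_mul_eq_mul_of_dvd_of_lt {n c s d : ℕ} (hn : n = c + 1 ∨ n = 2 * c + 1)
    (hc : 0 < c) (hcs : c ∣ s) (hs : s < n) (hsd : s * d = c * n) : d = n := by
  obtain ⟨m, rfl⟩ := hcs
  have hmd : m * d = n := Nat.eq_of_mul_eq_mul_left hc (by rw [← mul_assoc, hsd])
  rcases hn with rfl | rfl
  · have : m ≤ 1 := by nlinarith
    interval_cases m <;> omega
  · have : m ≤ 2 := by nlinarith
    interval_cases m <;> omega

theorem Nat.eq_of_dvd_of_dvd_sub_one {n c d : ℕ} (hn : n = c + 1 ∨ n = 2 * c + 1) (hdn : d ∣ n)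
    (hcd : c ∣ d - 1) (hd : 1 < d) : d = n := by
  have hdle : d ≤ n := Nat.le_of_dvd (by omega) hdn
  obtain ⟨j, hj⟩ := hcd
  have hc : 0 < c := Nat.pos_of_ne_zero (by rintro rfl; omega)
  rcases hn with rfl | rfl
  · have : j < 2 := Nat.lt_of_mul_lt_mul_left (a := c) (by omega)
    interval_cases j <;> omega
  · have : j < 3 := Nat.lt_of_mul_lt_mul_left (a := c) (by omega)
    interval_cases j
    · omega
    · -- `d = c + 1` would divide `2 * d - n = 1`
      have : d ∣ 2 * d - (2 * c + 1) := Nat.dvd_sub (dvd_mul_left d 2) hdn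
      have : d ∣ 1 := by rwa [show 2 * d - (2 * c + 1) = 1 by omega] at this
      have := Nat.le_of_dvd one_pos this
      omega
    · omega

section Frobenius

variable (A Ω : Type*) [Group A] [MulAction A Ω]

def derangementSet : Set A := {g | ∀ ω : Ω, g • ω ≠ ω}

def AtMostOneFixedPoint : Prop :=
  ∀ g : A, g ≠ 1 → ∀ ω ω' : Ω, g • ω = ω → g • ω' = ω' → ω = ω'

variable {A Ω}

theorem one_notMem_derangementSet [Nonempty Ω] : (1 : A) ∉ derangementSet A Ω := fun h =>
  h (Classical.arbitrary Ω) (one_smul A _)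

theorem conj_mem_derangementSet {g : A} (hg : g ∈ derangementSet A Ω) (a : A) :
    a * g * a⁻¹ ∈ derangementSet A Ω := fun ω hω =>
  hg (a⁻¹ • ω) (by simpa [mul_smul] using congrArg (a⁻¹ • ·) hω)

theorem conj_mem_insert_one_derangementSet {g : A} (hg : g ∈ insert 1 (derangementSet A Ω))
    (a : A) : a * g * a⁻¹ ∈ insert 1 (derangementSet A Ω) := by
  rcases hg with rfl | hg
  · exact Or.inl (by group)
  · exact Or.inr (conj_mem_derangementSet hg a)

theorem fixedBy_eq_empty_iff {g : A} : fixedBy Ω g = ∅ ↔ g ∈ derangementSet A Ω :=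
  Set.eq_empty_iff_forall_notMem

theorem sum_ncard_fixedBy_of_isPretransitive [Fintype A] [Finite Ω] [Nonempty Ω]
    [IsPretransitive A Ω] : ∑ g : A, (fixedBy Ω g).ncard = Nat.card A := by
  classical
  have := Fintype.ofFinite Ω
  have : Unique (orbitRel.Quotient A Ω) :=
    @Unique.mk' _ ⟨Quotient.mk _ (Classical.arbitrary Ω)⟩
      ((pretransitive_iff_subsingleton_quotient A Ω).1 inferInstance)
  simpa [Nat.card_eq_fintype_card, Set.ncard_eq_toFinset_card'] using
    sum_card_fixedBy_eq_card_orbits_mul_card_group A Ω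

namespace AtMostOneFixedPoint

variable (hA : AtMostOneFixedPoint A Ω)
include hA

theorem eq_one_of_commute {g x : A} (hg : g ∈ derangementSet A Ω) {ω : Ω} (hx : x • ω = ω)
    (hxg : Commute x g) : x = 1 := by
  by_contra hx1
  have hxgω : x • g • ω = g • ω := by rw [← mul_smul, hxg.eq, mul_smul, hx]
  exact hg ω (hA x hx1 ω (g • ω) hx hxgω).symm

theorem ncard_fixedBy_of_notMem {g : A} (hg : g ≠ 1) (hD : g ∉ derangementSet A Ω) :
    (fixedBy Ω g).ncard = 1 := by
  obtain ⟨ω, hω⟩ : ∃ ω, g • ω = ω := by simpa [derangementSet] using hD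
  exact Set.ncard_eq_one.2 ⟨ω, Set.eq_singleton_iff_unique_mem.2
    ⟨hω, fun ω' hω' => hA g hg ω' ω hω' hω⟩⟩

theorem ncard_derangementSet_add_one [Finite A] [Finite Ω] [Nonempty Ω] [IsPretransitive A Ω] :
    (derangementSet A Ω).ncard + 1 = Nat.card Ω := by
  classical
  have := Fintype.ofFinite A
  have hpoint : ∀ g ∈ Finset.univ.erase (1 : A),
      (fixedBy Ω g).ncard + (if g ∈ derangementSet A Ω then 1 else 0) = 1 := by
    intro g hg
    have hg1 := Finset.ne_of_mem_erase hg
    split_ifs with hD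
    · simp [fixedBy_eq_empty_iff.2 hD]
    · simp [hA.ncard_fixedBy_of_notMem hg1 hD]
  have hsum := Finset.add_sum_erase Finset.univ
    (fun g : A => (fixedBy Ω g).ncard + if g ∈ derangementSet A Ω then 1 else 0)
    (Finset.mem_univ 1)
  rw [Finset.sum_congr rfl hpoint, Finset.sum_add_distrib,
    sum_ncard_fixedBy_of_isPretransitive, Finset.sum_boole] at hsum
  have hcard : (Finset.univ.filter (· ∈ derangementSet A Ω)).card =
      (derangementSet A Ω).ncard := by
    rw [← Set.ncard_coe_finset]; simp
  simp only [fixedBy_one_eq_univ, Set.ncard_univ, one_notMem_derangementSet, if_false,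
    add_zero, Finset.sum_const, Finset.card_erase_of_mem (Finset.mem_univ _), smul_eq_mul, mul_one,
    Finset.card_univ, hcard, Nat.cast_id, Nat.card_eq_fintype_card] at hsum
  have := Fintype.card_pos (α := A)
  omega

theorem nat_card_eq_of_coe_eq [Finite A] [Finite Ω] [Nonempty Ω] [IsPretransitive A Ω]
    (N : Subgroup A) (hN : (N : Set A) = insert 1 (derangementSet A Ω)) :
    Nat.card N = Nat.card Ω := by
  rw [← hA.ncard_derangementSet_add_one, ← Set.ncard_insert_of_notMem one_notMem_derangementSet,
    ← hN]
  exact Nat.card_coe_set_eq (N : Set A)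

theorem card_stabilizer_dvd_ncard (α : Ω) {S : Set A}
    (hS : ∀ h ∈ stabilizer A α, ∀ x ∈ S, h * x * h⁻¹ ∈ S) (hSD : S ⊆ derangementSet A Ω) :
    Nat.card (stabilizer A α) ∣ S.ncard :=
  -- `A_α` acting on `A` by conjugation, not by the left multiplication `Subgroup` provides
  @MulAction.nat_card_dvd_ncard_of_free _ _ _
    (MulAction.compHom A (MulAut.conj.comp (stabilizer A α).subtype)) S
    (fun h x hx => hS h h.2 x hx)
    (fun h _ hx hfix => Subtype.ext
      (hA.eq_one_of_commute (hSD hx) h.2 (mul_inv_eq_iff_eq_mul.1 hfix)))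

theorem card_stabilizer_dvd_card_sub_one [Finite A] (α : Ω) (K : Subgroup A)
    (hK : (K : Set A) ⊆ insert 1 (derangementSet A Ω))
    (hKα : ∀ h ∈ stabilizer A α, ∀ x ∈ K, h * x * h⁻¹ ∈ K) :
    Nat.card (stabilizer A α) ∣ Nat.card K - 1 := by
  rw [show Nat.card K = (K : Set A).ncard from Nat.card_coe_set_eq _,
    ← Set.ncard_sdiff_singleton_of_mem K.one_mem]
  exact hA.card_stabilizer_dvd_ncard α
    (fun h hh x hx => ⟨hKα h hh x hx.1, fun h1 => hx.2 (conj_eq_one_iff.1 h1)⟩)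
    (fun x hx => (hK hx.1).resolve_left hx.2)

end AtMostOneFixedPoint

theorem card_stabilizer_mul_card [IsPretransitive A Ω] (α : Ω) :
    Nat.card (stabilizer A α) * Nat.card Ω = Nat.card A := by
  rw [← index_stabilizer_of_transitive A α]
  exact Subgroup.card_mul_index _

section Degree

variable [Finite Ω] [IsPretransitive A Ω] (α : Ω)

theorem card_eq_card_stabilizer_add_one (h : Nat.card A = Nat.card Ω * (Nat.card Ω - 1)) :
    Nat.card Ω = Nat.card (stabilizer A α) + 1 := by
  have hn : 0 < Nat.card Ω := Nat.card_pos_iff.2 ⟨⟨α⟩, inferInstance⟩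
  have := card_stabilizer_mul_card (A := A) α
  have : Nat.card Ω * Nat.card (stabilizer A α) = Nat.card Ω * (Nat.card Ω - 1) := by
    rw [mul_comm, this, h]
  have := Nat.eq_of_mul_eq_mul_left hn this
  omega

theorem card_eq_two_mul_card_stabilizer_add_one
    (h : 2 * Nat.card A = Nat.card Ω * (Nat.card Ω - 1)) :
    Nat.card Ω = 2 * Nat.card (stabilizer A α) + 1 := by
  have hn : 0 < Nat.card Ω := Nat.card_pos_iff.2 ⟨⟨α⟩, inferInstance⟩
  have := card_stabilizer_mul_card (A := A) α
  have : Nat.card Ω * (2 * Nat.card (stabilizer A α)) = Nat.card Ω * (Nat.card Ω - 1) := by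
    rw [← h, ← this]; ring
  have := Nat.eq_of_mul_eq_mul_left hn this
  omega

variable {α} (hA : AtMostOneFixedPoint A Ω)
  (hdeg : Nat.card Ω = Nat.card (stabilizer A α) + 1 ∨
    Nat.card Ω = 2 * Nat.card (stabilizer A α) + 1)
include hA hdeg

theorem AtMostOneFixedPoint.coe_centralizer_eq [Finite A] {g : A}
    (hg : g ∈ derangementSet A Ω) :
    (Subgroup.centralizer {g} : Set A) = insert 1 (derangementSet A Ω) := by
  have : Nonempty Ω := ⟨α⟩
  have hD := hA.ncard_derangementSet_add_one
  have hsub : (Subgroup.centralizer {g} : Set A) ⊆ insert 1 (derangementSet A Ω) := by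
    intro x hx
    rw [SetLike.mem_coe, Subgroup.mem_centralizer_singleton_iff] at hx
    by_contra hx'
    simp only [Set.mem_insert_iff, not_or] at hx'
    obtain ⟨ω, hω⟩ : ∃ ω, x • ω = ω := by simpa [derangementSet] using hx'.2
    exact hx'.1 (hA.eq_one_of_commute hg hω hx)
  have hclassD : orbit (ConjAct A) g ⊆ derangementSet A Ω := by
    rintro _ ⟨a, rfl⟩
    exact conj_mem_derangementSet hg _
  have hdvd : Nat.card (stabilizer A α) ∣ (orbit (ConjAct A) g).ncard :=
    hA.card_stabilizer_dvd_ncard α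
      (fun h _ x hx => mem_orbit_of_mem_orbit (ConjAct.toConjAct h) hx) hclassD
  have hclass :
      (orbit (ConjAct A) g).ncard * Nat.card (Subgroup.centralizer {g}) = Nat.card A := by
    rw [← index_stabilizer, Subgroup.nat_card_centralizer_nat_card_stabilizer,
      Subgroup.index_mul_card]
    rfl
  have hcard : Nat.card (Subgroup.centralizer {g}) = Nat.card Ω :=
    Nat.eq_of_mul_eq_mul_of_dvd_of_lt hdeg Nat.card_pos hdvd
      (by have := Set.ncard_le_ncard hclassD; omega) (by rw [hclass, card_stabilizer_mul_card])
  refine Set.eq_of_subset_of_ncard_le hsub ?_ (Set.toFinite _)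
  rw [Set.ncard_insert_of_notMem one_notMem_derangementSet, hD, ← hcard]
  exact (Nat.card_coe_set_eq (Subgroup.centralizer {g} : Set A)).le

theorem AtMostOneFixedPoint.commute_of_mem [Finite A] {x y : A}
    (hx : x ∈ insert 1 (derangementSet A Ω)) (hy : y ∈ insert 1 (derangementSet A Ω)) :
    Commute x y := by
  rcases hy with rfl | hy
  · exact Commute.one_right x
  · rw [← hA.coe_centralizer_eq hdeg hy] at hx
    exact Subgroup.mem_centralizer_singleton_iff.1 hx

theorem AtMostOneFixedPoint.exists_prime_pow_eq_one [Finite A] (N : Subgroup A)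
    (hN : (N : Set A) = insert 1 (derangementSet A Ω)) :
    ∃ q : ℕ, q.Prime ∧ q ∣ Nat.card Ω ∧ ∀ x ∈ N, x ^ q = 1 := by
  have : Nonempty Ω := ⟨α⟩
  have hNcard := hA.nat_card_eq_of_coe_eq N hN
  have hmemN (x : A) : x ∈ N ↔ x ∈ insert 1 (derangementSet A Ω) := by
    rw [← SetLike.mem_coe, hN]
  set q := (Nat.card Ω).minFac
  have hq : q.Prime := by
    have : 0 < Nat.card (stabilizer A α) := Nat.card_pos
    exact Nat.minFac_prime (by omega)
  have := Fact.mk hq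
  obtain ⟨Q, hmemQ⟩ := N.exists_forall_mem_iff_pow_eq_one
    (fun x hx y hy => hA.commute_of_mem hdeg ((hmemN x).1 hx) ((hmemN y).1 hy)) q
  have hQN : Q ≤ N := fun x hx => ((hmemQ x).1 hx).1
  have hQα : ∀ h ∈ stabilizer A α, ∀ x ∈ Q, h * x * h⁻¹ ∈ Q := fun h _ x hx =>
    (hmemQ _).2 ⟨(hmemN _).2 (conj_mem_insert_one_derangementSet ((hmemN x).1 (hQN hx)) h),
      by rw [conj_pow, ((hmemQ x).1 hx).2, mul_one, mul_inv_cancel]⟩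
  have hQ1 : 1 < Nat.card Q := by
    obtain ⟨x, hx⟩ := exists_prime_orderOf_dvd_card' (G := N) q (hNcard ▸ Nat.minFac_dvd _)
    refine (Subgroup.one_lt_card_iff_ne_bot Q).2 fun hbot => hq.one_lt.ne' ?_
    have hxQ : (x : A) ∈ Q :=
      (hmemQ x).2 ⟨x.2, by rw [← Subgroup.coe_pow, ← hx, pow_orderOf_eq_one]; rfl⟩
    rw [hbot, Subgroup.mem_bot] at hxQ
    rw [← hx, orderOf_eq_one_iff.2 (Subtype.ext hxQ)]
  have hQn : Nat.card Q = Nat.card Ω :=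
    Nat.eq_of_dvd_of_dvd_sub_one hdeg (hNcard ▸ Subgroup.card_dvd_of_le hQN)
      (hA.card_stabilizer_dvd_card_sub_one α Q (fun x hx => (hmemN x).1 (hQN hx)) hQα) hQ1
  have hQeq : Q = N := Subgroup.eq_of_le_of_card_ge hQN (by rw [hQn, hNcard])
  exact ⟨q, hq, Nat.minFac_dvd _, fun x hx => ((hmemQ x).1 (hQeq ▸ hx)).2⟩

end Degree

end Frobenius

theorem frobenius_kernel_elementary_abelian_general
    (A Ω : Type*) [Group A] [Fintype A] [Fintype Ω] [MulAction A Ω]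
    [MulAction.IsPretransitive A Ω]
    (hfrob : ∀ g : A, g ≠ 1 → ∀ ω ω' : Ω, g • ω = ω → g • ω' = ω' → ω = ω')
    (horder : Fintype.card A = Fintype.card Ω * (Fintype.card Ω - 1) ∨
      2 * Fintype.card A = Fintype.card Ω * (Fintype.card Ω - 1)) :
    ∃ (p : ℕ) (a : ℕ), p.Prime ∧ Fintype.card Ω = p ^ a ∧
      (∀ g : A, (g = 1 ∨ ∀ ω : Ω, g • ω ≠ ω) → g ^ p = 1) ∧
      (∀ g h : A, (g = 1 ∨ ∀ ω : Ω, g • ω ≠ ω) → (h = 1 ∨ ∀ ω : Ω, h • ω ≠ ω) →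
        g * h = h * g) ∧
      ((2 * Fintype.card A = Fintype.card Ω * (Fintype.card Ω - 1) ∧
          2 < Fintype.card Ω) → Odd p) := by
  simp only [← Nat.card_eq_fintype_card] at horder ⊢
  have hA : AtMostOneFixedPoint A Ω := hfrob
  have : Nonempty Ω := by
    rw [← not_isEmpty_iff]
    intro
    simp at horder
  have α : Ω := Classical.arbitrary Ω
  have hdeg := horder.imp (card_eq_card_stabilizer_add_one α)
    (card_eq_two_mul_card_stabilizer_add_one α)
  obtain ⟨g, hg⟩ : (derangementSet A Ω).Nonempty := by
    have := hA.ncard_derangementSet_add_one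
    have : 0 < Nat.card (stabilizer A α) := Nat.card_pos
    exact Set.nonempty_of_ncard_ne_zero (by omega)
  have hN := hA.coe_centralizer_eq hdeg hg
  obtain ⟨q, hq, hqn, hpow⟩ := hA.exists_prime_pow_eq_one hdeg _ hN
  have := Fact.mk hq
  obtain ⟨a, ha⟩ := IsPGroup.iff_card.1
    (fun x : Subgroup.centralizer {g} => ⟨1, Subtype.ext (by simpa using hpow x x.2)⟩)
  refine ⟨q, a, hq, ?_, fun x hx => hpow x ?_, fun x y hx hy => hA.commute_of_mem hdeg hx hy, ?_⟩
  · rw [← ha, hA.nat_card_eq_of_coe_eq _ hN]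
  · rw [← SetLike.mem_coe, hN]; exact hx
  · rintro ⟨h2, -⟩
    have := card_eq_two_mul_card_stabilizer_add_one α h2
    exact (Nat.odd_iff.2 (by omega)).of_dvd_nat hqn

/-- let `A` be a Frobenius group of degree `n` (transitive, no nontrivial
element fixes two points, some nontrivial element fixes a point) with `|A| = n(n-1)` or
`|A| = n(n-1)/2`.  Then the Frobenius kernel (identity together with the derangements)
is an elementary abelian `p`-group, so `n = p^a` is a prime power, and if
`|A| = n(n-1)/2` with `n > 2` then `p` is odd. -/
theorem frobenius_kernel_elementary_abelian
    (A Ω : Type*) [Group A] [Fintype A] [Fintype Ω] [Nonempty Ω] [MulAction A Ω]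
    [MulAction.IsPretransitive A Ω]
    (hfrob : ∀ g : A, g ≠ 1 → ∀ ω ω' : Ω, g • ω = ω → g • ω' = ω' → ω = ω')
    (hfix : ∃ g : A, g ≠ 1 ∧ ∃ ω : Ω, g • ω = ω)
    (horder : Fintype.card A = Fintype.card Ω * (Fintype.card Ω - 1) ∨
      2 * Fintype.card A = Fintype.card Ω * (Fintype.card Ω - 1)) :
    ∃ (p : ℕ) (a : ℕ), p.Prime ∧ Fintype.card Ω = p ^ a ∧
      (∀ g : A, (g = 1 ∨ ∀ ω : Ω, g • ω ≠ ω) → g ^ p = 1) ∧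
      (∀ g h : A, (g = 1 ∨ ∀ ω : Ω, g • ω ≠ ω) → (h = 1 ∨ ∀ ω : Ω, h • ω ≠ ω) →
        g * h = h * g) ∧
      ((2 * Fintype.card A = Fintype.card Ω * (Fintype.card Ω - 1) ∧
          2 < Fintype.card Ω) → Odd p) :=
  frobenius_kernel_elementary_abelian_general A Ω hfrob horder
end
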